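/- arXiv:math/9909049 — 5 statements merged into one kernel-verified Lean document; each statement's English description precedes it below -/
import Mathlib

section
/- Let X and Y be vector spaces over a field and let A, B : X → Y be linear maps such that for every x ∈ X the set {Ax, Bx} is linearly dependent. Then either both A and B have rank at most one, or A and B are linearly dependent (i.e., one is a scalar multiple of the other). -/
/-!
Suppose `rank (range A) > 1`. Then `B x ∈ K ∙ A x` for every `x`: when `A x ≠ 0` this is the
hypothesis, and when `A x = 0`, comparing `x + y` with `y` puts `B x` on the line `K ∙ A y` for
every `y ∉ ker A`; two of these lines are independent and meet only in `0`. Hence `B` descends to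
an endomorphism of `range A` that sends every vector to a multiple of itself, so it is a homothety
and `B = c • A`. The case `rank (range B) > 1` is symmetric.
-/

open Submodule

section

variable {K X Y : Type*} [Field K] [AddCommGroup X] [Module K X] [AddCommGroup Y] [Module K Y]

theorem mem_span_singleton_of_not_linearIndependent_pair {u v : Y}
    (h : ¬ LinearIndependent K ![u, v]) (hu : u ≠ 0) : v ∈ K ∙ u := by
  simpa [LinearIndependent.pair_iff' hu, mem_span_singleton] using h

theorem not_linearIndependent_pair_self_smul (u : Y) (c : K) :
    ¬ LinearIndependent K ![u, c • u] := fun hli ↦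
  neg_ne_zero.mpr one_ne_zero <|
    (LinearIndependent.pair_iff.mp hli c (-1) (by rw [neg_one_smul, add_neg_cancel])).2

theorem LinearIndependent.eq_zero_of_mem_span_singleton_of_mem_span_singleton {u v w : Y}
    (huv : LinearIndependent K ![u, v]) (hu : w ∈ K ∙ u) (hv : w ∈ K ∙ v) : w = 0 := by
  obtain ⟨a, rfl⟩ := mem_span_singleton.mp hu
  obtain ⟨b, hb⟩ := mem_span_singleton.mp hv
  have ha := (LinearIndependent.pair_iff.mp huv a (-b) (by rw [neg_smul, hb, add_neg_cancel])).1
  rw [ha, zero_smul]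

namespace LinearMap

variable {A B : X →ₗ[K] Y}

theorem exists_eq_smul_of_forall_mem_span_singleton (hB : ∀ x, B x ∈ K ∙ A x) :
    ∃ c : K, B = c • A := by
  have hker : ker A ≤ ker B := fun x hx ↦ by
    simpa [mem_ker.mp hx] using hB x
  have hrange (x : X) : B x ∈ range A :=
    span_singleton_le_iff_mem _ _ |>.mpr (mem_range_self A x) (hB x)
  let g : Module.End K (range A) :=
    (((ker A).liftQ B hker).codRestrict (range A) (by rintro ⟨x⟩; exact hrange x)).comp
      A.quotKerEquivRange.symm.toLinearMap
  have hg (x : X) : (g ⟨A x, mem_range_self A x⟩ : Y) = B x := by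
    simp [g]
  obtain ⟨c, hc⟩ := exists_eq_smul_id_of_forall_notLinearIndependent (f := g) <| by
    rintro ⟨_, x, rfl⟩
    obtain ⟨a, ha⟩ := mem_span_singleton.mp (hB x)
    have hga : g ⟨A x, mem_range_self A x⟩ = a • ⟨A x, mem_range_self A x⟩ :=
      Subtype.ext <| (hg x).trans ha.symm
    rw [hga]
    exact not_linearIndependent_pair_self_smul _ a
  refine ⟨c, ext fun x ↦ ?_⟩
  rw [← hg x, hc]
  rfl

theorem exists_linearIndependent_pair_of_one_lt_rank_range (hA : 1 < Module.rank K (range A)) :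
    ∃ y z, LinearIndependent K ![A y, A z] := by
  have : Nontrivial (range A) := rank_pos_iff_nontrivial.mp (zero_lt_one.trans hA)
  obtain ⟨⟨_, y, rfl⟩, hy⟩ := exists_ne (0 : range A)
  obtain ⟨⟨_, z, rfl⟩, hyz⟩ := exists_linearIndependent_pair_of_one_lt_rank hA hy
  refine ⟨y, z, ?_⟩
  have hyz' := hyz.map' (range A).subtype (ker_subtype _)
  rwa [show (range A).subtype ∘ _ = ![A y, A z] by ext i; fin_cases i <;> rfl] at hyz'

theorem apply_mem_span_singleton_of_apply_ne_zero (h : ∀ x, ¬ LinearIndependent K ![A x, B x])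
    {x : X} (hx : A x ≠ 0) : B x ∈ K ∙ A x :=
  mem_span_singleton_of_not_linearIndependent_pair (h x) hx

theorem apply_mem_span_singleton_of_apply_eq_zero (h : ∀ x, ¬ LinearIndependent K ![A x, B x])
    {x y : X} (hx : A x = 0) (hy : A y ≠ 0) : B x ∈ K ∙ A y := by
  have hxy : A (x + y) = A y := by rw [map_add, hx, zero_add]
  have hBxy : B (x + y) ∈ K ∙ A y :=
    hxy ▸ apply_mem_span_singleton_of_apply_ne_zero h (hxy ▸ hy)
  simpa using sub_mem hBxy (apply_mem_span_singleton_of_apply_ne_zero h hy)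

theorem apply_mem_span_singleton_of_one_lt_rank (h : ∀ x, ¬ LinearIndependent K ![A x, B x])
    (hA : 1 < Module.rank K (range A)) (x : X) : B x ∈ K ∙ A x := by
  by_cases hx : A x = 0
  swap; · exact apply_mem_span_singleton_of_apply_ne_zero h hx
  obtain ⟨y, z, hyz⟩ := exists_linearIndependent_pair_of_one_lt_rank_range hA
  have hBx := hyz.eq_zero_of_mem_span_singleton_of_mem_span_singleton
    (apply_mem_span_singleton_of_apply_eq_zero h hx (hyz.ne_zero 0))
    (apply_mem_span_singleton_of_apply_eq_zero h hx (hyz.ne_zero 1))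
  rw [hBx]
  exact zero_mem _

theorem exists_eq_smul_of_one_lt_rank (h : ∀ x, ¬ LinearIndependent K ![A x, B x])
    (hA : 1 < Module.rank K (range A)) : ∃ c : K, B = c • A :=
  exists_eq_smul_of_forall_mem_span_singleton (apply_mem_span_singleton_of_one_lt_rank h hA)

end LinearMap

end

/-- If `A B : X → Y` are linear maps such that `{Ax, Bx}` is linearly dependent for every
`x`, then either both `A` and `B` have rank at most one, or `A` and `B` are linearly
dependent. -/
theorem stmt2 {K X Y : Type*} [Field K] [AddCommGroup X] [Module K X]
    [AddCommGroup Y] [Module K Y] (A B : X →ₗ[K] Y)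
    (h : ∀ x : X, ¬ LinearIndependent K ![A x, B x]) :
    (Module.rank K (LinearMap.range A) ≤ 1 ∧ Module.rank K (LinearMap.range B) ≤ 1) ∨
      ¬ LinearIndependent K ![A, B] := by
  by_cases hA : Module.rank K (LinearMap.range A) ≤ 1
  · by_cases hB : Module.rank K (LinearMap.range B) ≤ 1
    · exact Or.inl ⟨hA, hB⟩
    have h' (x : X) : ¬ LinearIndependent K ![B x, A x] :=
      h x ∘ LinearIndependent.pair_symm_iff.mp
    obtain ⟨c, rfl⟩ := LinearMap.exists_eq_smul_of_one_lt_rank h' (not_le.mp hB)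
    exact Or.inr <| not_linearIndependent_pair_self_smul B c ∘ LinearIndependent.pair_symm_iff.mp
  · obtain ⟨c, rfl⟩ := LinearMap.exists_eq_smul_of_one_lt_rank h (not_le.mp hA)
    exact Or.inr <| not_linearIndependent_pair_self_smul A c
end

section
/- Let A = M_d(ℂ) with d > 1, let ℋ be a Hilbert C*-module over A, and let T : ℋ → ℋ be a function satisfying |[Tf, Tf']| = |[f, f']| for all f, f' ∈ ℋ, where |a| = (a*a)^{1/2} in A. Then there exist an A-linear isometry U : ℋ → ℋ (i.e., U is linear, U(af) = a Uf, and [Uf, Uf'] = [f, f'] for all a ∈ A, f, f' ∈ ℋ) and a function φ : ℋ → ℂ with |φ(f)| = 1 for all f, such that Tf = φ(f) Uf for all f ∈ ℋ. -/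
open scoped ComplexOrder ComplexInnerProductSpace
open Matrix

/-- The absolute value `|a| = (a*a)^{1/2}` of a complex matrix. -/
noncomputable def matrixAbs {d : ℕ} (a : Matrix (Fin d) (Fin d) ℂ) :
    Matrix (Fin d) (Fin d) ℂ :=
  (Matrix.posSemidef_conjTranspose_mul_self a).1.eigenvectorUnitary.1 *
    Matrix.diagonal (fun i => ((Real.sqrt
      ((Matrix.posSemidef_conjTranspose_mul_self a).1.eigenvalues i) : ℝ) : ℂ)) *
    (star (Matrix.posSemidef_conjTranspose_mul_self a).1.eigenvectorUnitary :
      Matrix (Fin d) (Fin d) ℂ)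

lemma matrixAbs_sq {d : ℕ} (a : Matrix (Fin d) (Fin d) ℂ) :
    matrixAbs a * matrixAbs a = aᴴ * a := by
  unfold matrixAbs
  generalize Matrix.posSemidef_conjTranspose_mul_self a = hP
  have hS := hP.1.spectral_theorem
  rw [Unitary.conjStarAlgAut_apply] at hS
  have hUU := Unitary.coe_star_mul_self hP.1.eigenvectorUnitary
  have hD : diagonal (fun i => ((Real.sqrt (hP.1.eigenvalues i) : ℝ) : ℂ)) *
      diagonal (fun i => ((Real.sqrt (hP.1.eigenvalues i) : ℝ) : ℂ)) =
      diagonal (fun i => ((hP.1.eigenvalues i : ℝ) : ℂ)) := by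
    rw [diagonal_mul_diagonal]
    congr 1
    funext i
    rw [← Complex.ofReal_mul, Real.mul_self_sqrt (hP.eigenvalues_nonneg i)]
  simp only [Matrix.mul_assoc]
  rw [← Matrix.mul_assoc (star hP.1.eigenvectorUnitary : Matrix (Fin d) (Fin d) ℂ), hUU,
    Matrix.one_mul, ← Matrix.mul_assoc (diagonal _), hD, ← Matrix.mul_assoc]
  exact hS.symm

lemma entry_mul_conjTranspose {n : Type*} [Fintype n] (M : Matrix n n ℂ) (p q : n) :
    (M * Mᴴ) p q = ∑ j, M p j * (starRingEnd ℂ) (M q j) := by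
  simp [Matrix.mul_apply, Matrix.conjTranspose_apply]

lemma entry_conjTranspose_mul {n : Type*} [Fintype n] (M : Matrix n n ℂ) (p q : n) :
    (Mᴴ * M) p q = ∑ i, (starRingEnd ℂ) (M i p) * M i q := by
  simp [Matrix.mul_apply, Matrix.conjTranspose_apply, mul_comm]

lemma cs_helper {H : Type*} [NormedAddCommGroup H] [InnerProductSpace ℂ H]
    (v a : H) (n c : ℂ) (hvv : ⟪v, v⟫ = n) (haa : ⟪a, a⟫ = n)
    (hva : ⟪v, a⟫ = c) (hcc : c * (starRingEnd ℂ) c = n * n)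
    (hn : (starRingEnd ℂ) n = n) : n • a = c • v := by
  have hav : ⟪a, v⟫ = (starRingEnd ℂ) c := by rw [← inner_conj_symm, hva]
  have key : ⟪n • a - c • v, n • a - c • v⟫ = 0 := by
    simp only [inner_sub_left, inner_sub_right, inner_smul_left, inner_smul_right,
      hvv, haa, hva, hav, hn]
    linear_combination (-n) * hcc
  have h0 := inner_self_eq_zero.mp key
  rw [sub_eq_zero] at h0
  exact h0

lemma unit_of_mul_conj (c : ℂ) (h : c * (starRingEnd ℂ) c = 1) : ‖c‖ = 1 := by
  have h1 : (Complex.normSq c : ℂ) = 1 := by rw [← Complex.mul_conj]; exact h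
  have h2 : Complex.normSq c = 1 := by exact_mod_cast h1
  have h3 : ‖c‖ ^ 2 = 1 := by
    rw [Complex.sq_norm, h2]
  nlinarith [norm_nonneg c]

/-- **Wigner's theorem for Hilbert modules.** -/
theorem stmt7 (d : ℕ) (hd : 1 < d)
    (H : Type*) [NormedAddCommGroup H] [InnerProductSpace ℂ H] [CompleteSpace H]
    [Module (Matrix (Fin d) (Fin d) ℂ) H]
    [IsScalarTower ℂ (Matrix (Fin d) (Fin d) ℂ) H]
    (E : H → H → Matrix (Fin d) (Fin d) ℂ)
    (hadd : ∀ f g h : H, E (f + g) h = E f h + E g h)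
    (hsm : ∀ (a : Matrix (Fin d) (Fin d) ℂ) (f g : H), E (a • f) g = a * E f g)
    (hstar : ∀ f g : H, E g f = (E f g)ᴴ)
    (hpos : ∀ f : H, (E f f).PosSemidef)
    (hdef : ∀ f : H, E f f = 0 ↔ f = 0)
    (hinner : ∀ f g : H, (inner ℂ f g : ℂ) = (E g f).trace)
    (T : H → H)
    (hT : ∀ f f' : H, matrixAbs (E (T f) (T f')) = matrixAbs (E f f')) :
    ∃ (U : H →ₗ[ℂ] H) (φ : H → ℂ),
      (∀ (a : Matrix (Fin d) (Fin d) ℂ) (f : H), U (a • f) = a • U f) ∧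
      (∀ f f' : H, E (U f) (U f') = E f f') ∧
      (∀ f : H, ‖φ f‖ = 1) ∧
      ∀ f : H, T f = φ f • U f := by
  classical
  obtain ⟨i0, i1, hi01⟩ : ∃ i0 i1 : Fin d, i0 ≠ i1 :=
    ⟨⟨0, by omega⟩, ⟨1, hd⟩, by simp [Fin.ext_iff]⟩
  -- basic scalar algebra
  have hms : ∀ (a b : Matrix (Fin d) (Fin d) ℂ) (x : H), a • b • x = (a * b) • x :=
    fun a b x => (mul_smul a b x).symm
  have hcs : ∀ (c : ℂ) (a : Matrix (Fin d) (Fin d) ℂ) (x : H), a • c • x = c • a • x := by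
    intro c a x
    have h1 : c • x = (c • (1 : Matrix (Fin d) (Fin d) ℂ)) • x := by
      rw [smul_assoc, one_smul]
    rw [h1, hms, mul_smul_comm, mul_one, smul_assoc]
  have hone : ∑ i : Fin d, Matrix.single i i (1:ℂ) = (1 : Matrix (Fin d) (Fin d) ℂ) := by
    ext a b
    by_cases hab : a = b
    · subst hab
      simp [Matrix.sum_apply, Matrix.single, Matrix.one_apply]
    · rw [Matrix.sum_apply, Finset.sum_eq_zero, Matrix.one_apply_ne hab]
      intro i _
      simp only [Matrix.single, of_apply]
      rw [if_neg]
      rintro ⟨rfl, rfl⟩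
      exact hab rfl
  -- components
  obtain ⟨k, hk⟩ : ∃ k : Fin d → H → H, ∀ i f, k i f = Matrix.single i0 i (1:ℂ) • f :=
    ⟨_, fun _ _ => rfl⟩
  have hkK : ∀ (i : Fin d) (f : H), Matrix.single i0 i0 (1:ℂ) • k i f = k i f := by
    intro i f
    rw [hk, hms, Matrix.single_mul_single_same, one_mul]
  have hrecon : ∀ f : H, ∑ i, Matrix.single i i0 (1:ℂ) • k i f = f := by
    intro f
    have h1 : ∀ i : Fin d, Matrix.single i i0 (1:ℂ) • k i f = Matrix.single i i (1:ℂ) • f := by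
      intro i
      rw [hk, hms, Matrix.single_mul_single_same, one_mul]
    rw [Finset.sum_congr rfl (fun i _ => h1 i), ← Finset.sum_smul, hone, one_smul]
  have hk0 : ∀ x : H, Matrix.single i0 i0 (1:ℂ) • x = x → k i0 x = x := by
    intro x hx
    rw [hk]; exact hx
  have hkj : ∀ x : H, Matrix.single i0 i0 (1:ℂ) • x = x → ∀ j, j ≠ i0 → k j x = 0 := by
    intro x hx j hj
    rw [hk, ← hx, hms, Matrix.single_mul_single_of_ne (h := hj), zero_smul]
  -- second-variable module property
  have hsm2 : ∀ (a : Matrix (Fin d) (Fin d) ℂ) (f g : H), E f (a • g) = E f g * aᴴ := by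
    intro a f g
    rw [hstar (a • g) f, hsm, conjTranspose_mul, ← hstar g f]
  -- trace computation
  have hct : ∀ (p q : Fin d), (Matrix.single p q (1:ℂ))ᴴ = Matrix.single q p 1 := by
    intro p q
    ext a c
    simp [Matrix.conjTranspose_apply, Matrix.single, and_comm, apply_ite]
  have htr : ∀ (M : Matrix (Fin d) (Fin d) ℂ) (i j : Fin d),
      (Matrix.single i0 i (1:ℂ) * M * Matrix.single j i0 (1:ℂ)).trace = M i j := by
    intro M i j
    rw [Matrix.trace, Fintype.sum_eq_single i0]
    · rw [Matrix.diag_apply, Matrix.mul_assoc, Matrix.single_mul_apply_same,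
        Matrix.mul_single_apply_same, one_mul, mul_one]
    · intro p hp
      rw [Matrix.diag_apply, Matrix.mul_assoc, Matrix.single_mul_apply_of_ne _ _ _ _ _ hp]
  -- the entry formula
  have hentry : ∀ (f g : H) (i j : Fin d), E f g i j = ⟪k j g, k i f⟫ := by
    intro f g i j
    have h1 : (⟪k j g, k i f⟫ : ℂ) = (E (k i f) (k j g)).trace := hinner _ _
    rw [h1, hk, hk, hsm, hsm2, hct, ← Matrix.mul_assoc, htr]
  -- squared relations
  have hAsq : ∀ f g : H, (E (T f) (T g))ᴴ * E (T f) (T g) = (E f g)ᴴ * E f g := by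
    intro f g
    have h1 := congrArg (fun X => X * X) (hT f g)
    simpa only [matrixAbs_sq] using h1
  have hBsq : ∀ f g : H, E (T f) (T g) * (E (T f) (T g))ᴴ = E f g * (E f g)ᴴ := by
    intro f g
    have h1 := hAsq g f
    rw [hstar (T f) (T g), hstar f g, conjTranspose_conjTranspose,
      conjTranspose_conjTranspose] at h1
    exact h1
  have hB : ∀ f : H, E (T f) (T f) = E f f := by
    intro f
    refine (fun (X Y : Matrix (Fin d) (Fin d) ℂ) (hX : X.PosSemidef) (hY : Y.PosSemidef)
        (h : X ^ 2 = Y ^ 2) => (by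
          rw [pow_two, pow_two] at h
          open scoped MatrixOrder Matrix.Norms.L2Operator in
          rw [← CFC.sqrt_mul_self X (nonneg_iff_posSemidef.mpr hX), h,
            CFC.sqrt_mul_self Y (nonneg_iff_posSemidef.mpr hY)] : X = Y))
      _ _ (hpos (T f)) (hpos f) ?_
    rw [pow_two, pow_two]
    have h1 := hAsq f f
    rwa [(hpos (T f)).1, (hpos f).1] at h1
  -- inner-level preserved quantities
  have P1 : ∀ (f : H) (i j : Fin d), (⟪k j (T f), k i (T f)⟫ : ℂ) = ⟪k j f, k i f⟫ := by
    intro f i j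
    rw [← hentry, ← hentry, hB f]
  have P2 : ∀ (f g : H) (p q : Fin d),
      ∑ j, (⟪k j (T g), k p (T f)⟫ : ℂ) * (starRingEnd ℂ) (⟪k j (T g), k q (T f)⟫ : ℂ)
      = ∑ j, (⟪k j g, k p f⟫ : ℂ) * (starRingEnd ℂ) (⟪k j g, k q f⟫ : ℂ) := by
    intro f g p q
    have h : ∀ p q : Fin d, (E (T f) (T g) * (E (T f) (T g))ᴴ) p q = (E f g * (E f g)ᴴ) p q :=
      fun p q => by rw [hBsq f g]
    have h2 := h p q
    rw [entry_mul_conjTranspose, entry_mul_conjTranspose] at h2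
    simpa only [hentry] using h2
  have P3 : ∀ (f g : H) (p q : Fin d),
      ∑ i, (starRingEnd ℂ) (⟪k p (T g), k i (T f)⟫ : ℂ) * (⟪k q (T g), k i (T f)⟫ : ℂ)
      = ∑ i, (starRingEnd ℂ) (⟪k p g, k i f⟫ : ℂ) * (⟪k q g, k i f⟫ : ℂ) := by
    intro f g p q
    have h : ∀ p q : Fin d, ((E (T f) (T g))ᴴ * E (T f) (T g)) p q = ((E f g)ᴴ * E f g) p q :=
      fun p q => by rw [hAsq f g]
    have h2 := h p q
    rw [entry_conjTranspose_mul, entry_conjTranspose_mul] at h2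
    simpa only [hentry] using h2
  -- T preserves K
  have hTK : ∀ x : H, Matrix.single i0 i0 (1:ℂ) • x = x →
      Matrix.single i0 i0 (1:ℂ) • T x = T x := by
    intro x hx
    have hz : ∀ j, j ≠ i0 → k j (T x) = 0 := by
      intro j hj
      have h1 : (⟪k j (T x), k j (T x)⟫ : ℂ) = 0 := by
        rw [P1, hkj x hx j hj, inner_zero_left]
      exact inner_self_eq_zero.mp h1
    have h2 := hrecon (T x)
    have h3 : ∑ i, Matrix.single i i0 (1:ℂ) • k i (T x)
        = Matrix.single i0 i0 (1:ℂ) • k i0 (T x) := by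
      apply Fintype.sum_eq_single
      intro j hj
      rw [hz j hj, smul_zero]
    rw [h3, hk, hms, Matrix.single_mul_single_same, one_mul] at h2
    exact h2
  -- sum reduction helpers
  have hsum2 : ∀ F : Fin d → ℂ, (∀ j, j ≠ i0 → j ≠ i1 → F j = 0) →
      ∑ j, F j = F i0 + F i1 := by
    intro F hF
    have h1 : ∑ j ∈ ({i0, i1} : Finset (Fin d)), F j = F i0 + F i1 := Finset.sum_pair hi01
    rw [← h1]
    refine (Finset.sum_subset (Finset.subset_univ _) ?_).symm
    intro x _ hx
    simp only [Finset.mem_insert, Finset.mem_singleton, not_or] at hx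
    exact hF x hx.1 hx.2
  by_cases htriv : ∀ x : H, Matrix.single i0 i0 (1:ℂ) • x = x → x = 0
  · -- trivial module : everything is zero
    have hzero : ∀ f : H, f = 0 := by
      intro f
      have h := hrecon f
      have h2 : ∀ i : Fin d, k i f = 0 := fun i => htriv _ (hkK i f)
      rw [Finset.sum_congr rfl (fun i _ => by rw [h2 i, smul_zero]),
        Finset.sum_const_zero] at h
      exact h.symm
    refine ⟨LinearMap.id, fun _ => 1, fun a f => rfl, fun f f' => rfl,
      fun f => by norm_num, fun f => ?_⟩
    rw [hzero (T f), hzero f]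
    simp
  · push_neg at htriv
    obtain ⟨b0, hb0K, hb0⟩ := htriv
    -- the unit vector b
    set b : H := ((‖b0‖ : ℂ))⁻¹ • b0 with hbdef
    have hbK : Matrix.single i0 i0 (1:ℂ) • b = b := by
      rw [hbdef, hcs, hb0K]
    have hb0n : (‖b0‖ : ℂ) ≠ 0 := by
      simp [norm_eq_zero, hb0]
    have hbb : (⟪b, b⟫ : ℂ) = 1 := by
      rw [hbdef, inner_smul_left, inner_smul_right, inner_self_eq_norm_sq_to_K]
      rw [map_inv₀, Complex.conj_ofReal]
      field_simp
      rfl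
    -- the pairing element
    obtain ⟨Pp, hPp⟩ : ∃ Pp : H → H, ∀ y, Pp y = b + Matrix.single i1 i0 (1:ℂ) • y :=
      ⟨_, fun _ => rfl⟩
    have hP0 : ∀ y : H, k i0 (Pp y) = b := by
      intro y
      rw [hPp, hk, smul_add, hms, Matrix.single_mul_single_of_ne (h := hi01), zero_smul, add_zero,
        ← hk, hk0 b hbK]
    have hP1 : ∀ y : H, Matrix.single i0 i0 (1:ℂ) • y = y → k i1 (Pp y) = y := by
      intro y hy
      rw [hPp, hk, smul_add, hms, Matrix.single_mul_single_same, one_mul, ← hk, ← hk,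
        hkj b hbK i1 (Ne.symm hi01), hk0 y hy, zero_add]
    have hPj : ∀ (y : H), Matrix.single i0 i0 (1:ℂ) • y = y →
        ∀ j, j ≠ i0 → j ≠ i1 → k j (Pp y) = 0 := by
      intro y hy j hj0 hj1
      rw [hPp, hk, smul_add, hms, Matrix.single_mul_single_of_ne (h := hj1), zero_smul, add_zero,
        ← hk, hkj b hbK j hj0]
    have hPK : ∀ y : H, Matrix.single i0 i0 (1:ℂ) • y = y →
        ∀ j, Matrix.single i0 i0 (1:ℂ) • k j (T (Pp y)) = k j (T (Pp y)) := by
      intro y hy j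
      exact hkK j _
    -- components of T (Pp y) vanish off {i0, i1}
    have hTPj : ∀ (y : H), Matrix.single i0 i0 (1:ℂ) • y = y →
        ∀ j, j ≠ i0 → j ≠ i1 → k j (T (Pp y)) = 0 := by
      intro y hy j hj0 hj1
      have h1 : (⟪k j (T (Pp y)), k j (T (Pp y))⟫ : ℂ) = 0 := by
        rw [P1, hPj y hy j hj0 hj1, inner_zero_left]
      exact inner_self_eq_zero.mp h1
    -- Gram facts for T (Pp y)
    have hGBB : ∀ y : H, Matrix.single i0 i0 (1:ℂ) • y = y →
        (⟪k i0 (T (Pp y)), k i0 (T (Pp y))⟫ : ℂ) = 1 := by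
      intro y hy
      rw [P1, hP0, hbb]
    have hGCC : ∀ y : H, Matrix.single i0 i0 (1:ℂ) • y = y →
        (⟪k i1 (T (Pp y)), k i1 (T (Pp y))⟫ : ℂ) = ⟪y, y⟫ := by
      intro y hy
      rw [P1, hP1 y hy]
    have hGBC : ∀ y : H, Matrix.single i0 i0 (1:ℂ) • y = y →
        (⟪k i0 (T (Pp y)), k i1 (T (Pp y))⟫ : ℂ) = ⟪b, y⟫ := by
      intro y hy
      rw [P1, hP0, hP1 y hy]
    -- T b
    have hTbK : Matrix.single i0 i0 (1:ℂ) • T b = T b := hTK b hbK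
    have hTbTb : (⟪T b, T b⟫ : ℂ) = 1 := by
      have h1 := P1 b i0 i0
      rw [hk0 _ hbK, hk0 _ hTbK, hbb] at h1
      exact h1
    -- lambda
    obtain ⟨lam, hlam⟩ : ∃ l : H → ℂ, ∀ y, l y = (⟪T b, k i0 (T (Pp y))⟫ : ℂ) :=
      ⟨_, fun _ => rfl⟩
    have hlamu : ∀ y : H, Matrix.single i0 i0 (1:ℂ) • y = y →
        lam y * (starRingEnd ℂ) (lam y) = 1 := by
      intro y hy
      have h := P2 (Pp y) b i0 i0
      have hL : ∑ j, (⟪k j (T b), k i0 (T (Pp y))⟫ : ℂ)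
          * (starRingEnd ℂ) (⟪k j (T b), k i0 (T (Pp y))⟫ : ℂ)
          = lam y * (starRingEnd ℂ) (lam y) := by
        rw [Fintype.sum_eq_single i0]
        · rw [hk0 _ hTbK, hlam]
        · intro j hj
          rw [hkj _ hTbK j hj, inner_zero_left, map_zero, mul_zero]
      have hR : ∑ j, (⟪k j b, k i0 (Pp y)⟫ : ℂ)
          * (starRingEnd ℂ) (⟪k j b, k i0 (Pp y)⟫ : ℂ) = 1 := by
        rw [Fintype.sum_eq_single i0]
        · rw [hk0 _ hbK, hP0, hbb]; simp
        · intro j hj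
          rw [hkj _ hbK j hj, inner_zero_left, map_zero, mul_zero]
      rw [hL, hR] at h
      exact h
    have hBy : ∀ y : H, Matrix.single i0 i0 (1:ℂ) • y = y →
        k i0 (T (Pp y)) = lam y • T b := by
      intro y hy
      have h := cs_helper (T b) (k i0 (T (Pp y))) 1 (lam y) hTbTb (hGBB y hy)
        (hlam y).symm (by rw [hlamu y hy, one_mul]) (by simp)
      rwa [one_smul] at h
    -- the map u on K
    obtain ⟨u, hu⟩ : ∃ u : H → H, ∀ y, u y = (starRingEnd ℂ) (lam y) • k i1 (T (Pp y)) :=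
      ⟨_, fun _ => rfl⟩
    have hCy : ∀ y : H, Matrix.single i0 i0 (1:ℂ) • y = y →
        k i1 (T (Pp y)) = lam y • u y := by
      intro y hy
      rw [hu, smul_smul, hlamu y hy, one_smul]
    have huK : ∀ y : H, Matrix.single i0 i0 (1:ℂ) • u y = u y := by
      intro y
      rw [hu, hcs, hkK]
    have hu1 : ∀ y : H, Matrix.single i0 i0 (1:ℂ) • y = y →
        (⟪u y, u y⟫ : ℂ) = ⟪y, y⟫ := by
      intro y hy
      rw [hu, inner_smul_left, inner_smul_right, hGCC y hy, Complex.conj_conj,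
        ← mul_assoc, hlamu y hy, one_mul]
    have hu2 : ∀ y : H, Matrix.single i0 i0 (1:ℂ) • y = y →
        (⟪T b, u y⟫ : ℂ) = ⟪b, y⟫ := by
      intro y hy
      have h1 := hGBC y hy
      rw [hBy y hy, inner_smul_left] at h1
      rw [hu, inner_smul_right]
      exact h1
    have hK0 : Matrix.single i0 i0 (1:ℂ) • (0 : H) = 0 := smul_zero _
    have hu0 : u (0 : H) = 0 := by
      have h1 : (⟪u (0:H), u (0:H)⟫ : ℂ) = 0 := by
        rw [hu1 0 hK0, inner_zero_left]
      exact inner_self_eq_zero.mp h1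
    have hub : u b = T b := by
      have hCB : k i1 (T (Pp b)) = k i0 (T (Pp b)) := by
        have h := cs_helper (k i0 (T (Pp b))) (k i1 (T (Pp b))) 1 1 (hGBB b hbK)
          (by rw [hGCC b hbK, hbb])
          (by rw [hGBC b hbK, hbb]) (by simp) (by simp)
        rw [one_smul, one_smul] at h
        exact h
      rw [hu, hCB, hBy b hbK, smul_smul, mul_comm, hlamu b hbK, one_smul]
    have hKadd : ∀ x y : H, Matrix.single i0 i0 (1:ℂ) • x = x →
        Matrix.single i0 i0 (1:ℂ) • y = y →
        Matrix.single i0 i0 (1:ℂ) • (x + y) = x + y := by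
      intro x y hx hy
      rw [smul_add, hx, hy]
    have hKsmul : ∀ (c : ℂ) (x : H), Matrix.single i0 i0 (1:ℂ) • x = x →
        Matrix.single i0 i0 (1:ℂ) • (c • x) = c • x := by
      intro c x hx
      rw [hcs, hx]
    -- the master relation
    have hstar2 : ∀ (f w : H), Matrix.single i0 i0 (1:ℂ) • w = w → ∀ p q : Fin d,
        (⟪T b, k p (T f)⟫ : ℂ) * (starRingEnd ℂ) (⟪T b, k q (T f)⟫ : ℂ)
          + (⟪u w, k p (T f)⟫ : ℂ) * (starRingEnd ℂ) (⟪u w, k q (T f)⟫ : ℂ)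
        = (⟪b, k p f⟫ : ℂ) * (starRingEnd ℂ) (⟪b, k q f⟫ : ℂ)
          + (⟪w, k p f⟫ : ℂ) * (starRingEnd ℂ) (⟪w, k q f⟫ : ℂ) := by
      intro f w hw p q
      have h := P2 f (Pp w) p q
      rw [hsum2 _ (fun j hj0 hj1 => by
        rw [hTPj w hw j hj0 hj1, inner_zero_left, zero_mul])] at h
      rw [hsum2 _ (fun j hj0 hj1 => by
        rw [hPj w hw j hj0 hj1, inner_zero_left, zero_mul])] at h
      rw [hP0, hP1 w hw, hBy w hw, hCy w hw] at h
      simp only [inner_smul_left] at h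
      have hunit := hlamu w hw
      calc (⟪T b, k p (T f)⟫ : ℂ) * (starRingEnd ℂ) (⟪T b, k q (T f)⟫ : ℂ)
            + (⟪u w, k p (T f)⟫ : ℂ) * (starRingEnd ℂ) (⟪u w, k q (T f)⟫ : ℂ)
          = ((starRingEnd ℂ) (lam w) * ⟪T b, k p (T f)⟫)
              * (starRingEnd ℂ) ((starRingEnd ℂ) (lam w) * ⟪T b, k q (T f)⟫)
            + ((starRingEnd ℂ) (lam w) * ⟪u w, k p (T f)⟫)
              * (starRingEnd ℂ) ((starRingEnd ℂ) (lam w) * ⟪u w, k q (T f)⟫) := by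
            simp only [_root_.map_mul, Complex.conj_conj]
            linear_combination (-(⟪T b, k p (T f)⟫ * (starRingEnd ℂ) (⟪T b, k q (T f)⟫ : ℂ))
              - ⟪u w, k p (T f)⟫ * (starRingEnd ℂ) (⟪u w, k q (T f)⟫ : ℂ)) * hunit
        _ = (⟪b, k p f⟫ : ℂ) * (starRingEnd ℂ) (⟪b, k q f⟫ : ℂ)
            + (⟪w, k p f⟫ : ℂ) * (starRingEnd ℂ) (⟪w, k q f⟫ : ℂ) := h
    have hstar0 : ∀ (f : H) (p q : Fin d),
        (⟪T b, k p (T f)⟫ : ℂ) * (starRingEnd ℂ) (⟪T b, k q (T f)⟫ : ℂ)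
        = (⟪b, k p f⟫ : ℂ) * (starRingEnd ℂ) (⟪b, k q f⟫ : ℂ) := by
      intro f p q
      have h := hstar2 f 0 hK0 p q
      rw [hu0] at h
      simpa using h
    have hstarw : ∀ (f w : H), Matrix.single i0 i0 (1:ℂ) • w = w → ∀ p q : Fin d,
        (⟪u w, k p (T f)⟫ : ℂ) * (starRingEnd ℂ) (⟪u w, k q (T f)⟫ : ℂ)
        = (⟪w, k p f⟫ : ℂ) * (starRingEnd ℂ) (⟪w, k q f⟫ : ℂ) := by
      intro f w hw p q
      have h := hstar2 f w hw p q
      rw [hstar0 f p q] at h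
      exact add_left_cancel h
    -- preservation with a b-component condition
    have hu4 : ∀ y z : H, Matrix.single i0 i0 (1:ℂ) • y = y →
        Matrix.single i0 i0 (1:ℂ) • z = z →
        ((⟪y, b⟫ : ℂ) ≠ 0 ∨ (⟪z, b⟫ : ℂ) ≠ 0) →
        (⟪u z, u y⟫ : ℂ) = ⟪z, y⟫ := by
      intro y z hy hz hcase
      have hTy0 := hBy y hy
      have hTy1 := hCy y hy
      have hTz0 := hBy z hz
      have hTz1 := hCy z hz
      have hub2 : (⟪u z, T b⟫ : ℂ) = (starRingEnd ℂ) (⟪b, z⟫ : ℂ) := by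
        rw [← inner_conj_symm, hu2 z hz]
      have hub3 : (⟪T b, u y⟫ : ℂ) = ⟪b, y⟫ := hu2 y hy
      have huy : lam y * (starRingEnd ℂ) (lam y) = 1 := hlamu y hy
      have huz : lam z * (starRingEnd ℂ) (lam z) = 1 := hlamu z hz
      rcases hcase with hc | hc
      · have h := P3 (Pp y) (Pp z) i0 i1
        rw [hsum2 _ (fun j hj0 hj1 => by
          rw [hTPj y hy j hj0 hj1, inner_zero_right, inner_zero_right, map_zero, zero_mul])] at h
        rw [hsum2 _ (fun j hj0 hj1 => by
          rw [hPj y hy j hj0 hj1, inner_zero_right, inner_zero_right, map_zero, zero_mul])] at h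
        rw [hTy0, hTy1, hTz0, hTz1, hP0, hP0, hP1 y hy, hP1 z hz] at h
        simp only [inner_smul_left, inner_smul_right, _root_.map_mul, _root_.map_one, Complex.conj_conj,
          hTbTb, hub2, hub3, hbb] at h
        have hy0 : (⟪y, b⟫ : ℂ) = (starRingEnd ℂ) (⟪b, y⟫ : ℂ) := (inner_conj_symm _ _).symm
        have hz0 : (⟪z, b⟫ : ℂ) = (starRingEnd ℂ) (⟪b, z⟫ : ℂ) := (inner_conj_symm _ _).symm
        have hne : (starRingEnd ℂ) (⟪b, y⟫ : ℂ) ≠ 0 := by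
          rw [← hy0]; exact hc
        have hgoal : (starRingEnd ℂ) (⟪b, y⟫ : ℂ) * (⟪u z, u y⟫ : ℂ)
            = (starRingEnd ℂ) (⟪b, y⟫ : ℂ) * (⟪z, y⟫ : ℂ) := by
          linear_combination h
            - ((lam z * (starRingEnd ℂ) (lam z)) * ((starRingEnd ℂ) (⟪b, z⟫ : ℂ)
                + (starRingEnd ℂ) (⟪b, y⟫ : ℂ) * (⟪u z, u y⟫ : ℂ))) * huy
            - ((starRingEnd ℂ) (⟪b, z⟫ : ℂ)
                + (starRingEnd ℂ) (⟪b, y⟫ : ℂ) * (⟪u z, u y⟫ : ℂ)) * huz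
            + hz0
        exact mul_left_cancel₀ hne hgoal
      · have h := P2 (Pp y) (Pp z) i0 i1
        rw [hsum2 _ (fun j hj0 hj1 => by
          rw [hTPj z hz j hj0 hj1, inner_zero_left, zero_mul])] at h
        rw [hsum2 _ (fun j hj0 hj1 => by
          rw [hPj z hz j hj0 hj1, inner_zero_left, zero_mul])] at h
        rw [hTy0, hTy1, hTz0, hTz1, hP0, hP0, hP1 y hy, hP1 z hz] at h
        simp only [inner_smul_left, inner_smul_right, _root_.map_mul, _root_.map_one, Complex.conj_conj,
          hTbTb, hub2, hub3, hbb] at h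
        have hz0 : (⟪z, b⟫ : ℂ) = (starRingEnd ℂ) (⟪b, z⟫ : ℂ) := (inner_conj_symm _ _).symm
        have hne : (starRingEnd ℂ) (⟪b, z⟫ : ℂ) ≠ 0 := by
          rw [← hz0]; exact hc
        have hgoal : (starRingEnd ℂ) (⟪b, z⟫ : ℂ) * (starRingEnd ℂ) (⟪u z, u y⟫ : ℂ)
            = (starRingEnd ℂ) (⟪b, z⟫ : ℂ) * (starRingEnd ℂ) (⟪z, y⟫ : ℂ) := by
          linear_combination h
            - ((lam z * (starRingEnd ℂ) (lam z)) * ((starRingEnd ℂ) (⟪b, y⟫ : ℂ)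
                + (starRingEnd ℂ) (⟪b, z⟫ : ℂ) * (starRingEnd ℂ) (⟪u z, u y⟫ : ℂ))) * huy
            - ((starRingEnd ℂ) (⟪b, y⟫ : ℂ)
                + (starRingEnd ℂ) (⟪b, z⟫ : ℂ) * (starRingEnd ℂ) (⟪u z, u y⟫ : ℂ)) * huz
            + (starRingEnd ℂ) (⟪z, y⟫ : ℂ) * hz0
        have h2 := mul_left_cancel₀ hne hgoal
        have h3 := congrArg (starRingEnd ℂ) h2
        simpa only [Complex.conj_conj] using h3
    have hu5 : ∀ y : H, Matrix.single i0 i0 (1:ℂ) • y = y → (⟪y, b⟫ : ℂ) = 0 →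
        u (y + b) = u y + u b := by
      intro y hy hyb
      have hybK := hKadd y b hy hbK
      have h1 : (⟪u (y + b), u (y + b)⟫ : ℂ) = ⟪y + b, y + b⟫ := hu1 _ hybK
      have hybb : (⟪y + b, b⟫ : ℂ) ≠ 0 := by
        rw [inner_add_left, hyb, zero_add, hbb]; norm_num
      have h2 : (⟪u (y + b), u y⟫ : ℂ) = ⟪y + b, y⟫ := hu4 y (y + b) hy hybK (Or.inr hybb)
      have h2' : (⟪u y, u (y + b)⟫ : ℂ) = ⟪y, y + b⟫ := by
        rw [← inner_conj_symm, h2, inner_conj_symm]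
      have h3 : (⟪u (y + b), u b⟫ : ℂ) = ⟪y + b, b⟫ := hu4 b (y + b) hbK hybK (Or.inr hybb)
      have h3' : (⟪u b, u (y + b)⟫ : ℂ) = ⟪b, y + b⟫ := by
        rw [← inner_conj_symm, h3, inner_conj_symm]
      have h4 : (⟪u y, u y⟫ : ℂ) = ⟪y, y⟫ := hu1 y hy
      have h5 : (⟪u y, u b⟫ : ℂ) = ⟪y, b⟫ := by
        rw [hub, ← inner_conj_symm, hu2 y hy, inner_conj_symm]
      have h5' : (⟪u b, u y⟫ : ℂ) = ⟪b, y⟫ := by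
        rw [hub, hu2 y hy]
      have h6 : (⟪u b, u b⟫ : ℂ) = ⟪b, b⟫ := hu1 b hbK
      have key : (⟪u (y + b) - u y - u b, u (y + b) - u y - u b⟫ : ℂ) = 0 := by
        simp only [inner_sub_left, inner_sub_right, h1, h2, h2', h3, h3', h4, h5, h5', h6]
        simp only [inner_add_left, inner_add_right]
        ring
      have h0 := inner_self_eq_zero.mp key
      have h7 : u (y + b) - u y - u b = 0 := h0
      have h8 : u (y + b) = u y + u b := by
        rw [sub_sub] at h7
        rw [sub_eq_zero] at h7
        exact h7
      exact h8
    have hu6 : ∀ y z : H, Matrix.single i0 i0 (1:ℂ) • y = y →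
        Matrix.single i0 i0 (1:ℂ) • z = z → (⟪u z, u y⟫ : ℂ) = ⟪z, y⟫ := by
      intro y z hy hz
      by_cases hyb : (⟪y, b⟫ : ℂ) = 0
      · by_cases hzb : (⟪z, b⟫ : ℂ) = 0
        · have hybK := hKadd y b hy hbK
          have hybb : (⟪y + b, b⟫ : ℂ) ≠ 0 := by
            rw [inner_add_left, hyb, zero_add, hbb]; norm_num
          have h1 : u (y + b) = u y + u b := hu5 y hy hyb
          have h2 : (⟪u z, u (y + b)⟫ : ℂ) = ⟪z, y + b⟫ :=
            hu4 (y + b) z hybK hz (Or.inl hybb)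
          rw [h1, inner_add_right] at h2
          rw [inner_add_right] at h2
          have h3 : (⟪u z, u b⟫ : ℂ) = ⟪z, b⟫ := by
            rw [hub, ← inner_conj_symm, hu2 z hz, inner_conj_symm]
          rw [h3] at h2
          exact add_right_cancel h2
        · exact hu4 y z hy hz (Or.inr hzb)
      · exact hu4 y z hy hz (Or.inl hyb)
    have hu7 : ∀ (c1 c2 : ℂ) (y z : H), Matrix.single i0 i0 (1:ℂ) • y = y →
        Matrix.single i0 i0 (1:ℂ) • z = z →
        u (c1 • y + c2 • z) = c1 • u y + c2 • u z := by
      intro c1 c2 y z hy hz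
      have hwK := hKadd _ _ (hKsmul c1 y hy) (hKsmul c2 z hz)
      have e1 : (⟪u (c1 • y + c2 • z), u (c1 • y + c2 • z)⟫ : ℂ)
          = ⟪c1 • y + c2 • z, c1 • y + c2 • z⟫ := hu1 _ hwK
      have e2 : (⟪u (c1 • y + c2 • z), u y⟫ : ℂ) = ⟪c1 • y + c2 • z, y⟫ :=
        hu6 y _ hy hwK
      have e3 : (⟪u (c1 • y + c2 • z), u z⟫ : ℂ) = ⟪c1 • y + c2 • z, z⟫ :=
        hu6 z _ hz hwK
      have e2' : (⟪u y, u (c1 • y + c2 • z)⟫ : ℂ) = ⟪y, c1 • y + c2 • z⟫ := by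
        rw [← inner_conj_symm, e2, inner_conj_symm]
      have e3' : (⟪u z, u (c1 • y + c2 • z)⟫ : ℂ) = ⟪z, c1 • y + c2 • z⟫ := by
        rw [← inner_conj_symm, e3, inner_conj_symm]
      have e4 : (⟪u y, u y⟫ : ℂ) = ⟪y, y⟫ := hu1 y hy
      have e5 : (⟪u z, u z⟫ : ℂ) = ⟪z, z⟫ := hu1 z hz
      have e6 : (⟪u y, u z⟫ : ℂ) = ⟪y, z⟫ := hu6 z y hz hy
      have e7 : (⟪u z, u y⟫ : ℂ) = ⟪z, y⟫ := hu6 y z hy hz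
      have key : (⟪u (c1 • y + c2 • z) - (c1 • u y + c2 • u z),
          u (c1 • y + c2 • z) - (c1 • u y + c2 • u z)⟫ : ℂ) = 0 := by
        simp only [inner_sub_left, inner_sub_right, inner_add_left, inner_add_right,
          inner_smul_left, inner_smul_right, e1, e2, e3, e2', e3', e4, e5, e6, e7]
        ring
      have h0 := inner_self_eq_zero.mp key
      rw [sub_eq_zero] at h0
      exact h0
    have huadd : ∀ y z : H, Matrix.single i0 i0 (1:ℂ) • y = y →
        Matrix.single i0 i0 (1:ℂ) • z = z → u (y + z) = u y + u z := by
      intro y z hy hz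
      have h := hu7 1 1 y z hy hz
      simpa using h
    have husmul : ∀ (c : ℂ) (y : H), Matrix.single i0 i0 (1:ℂ) • y = y →
        u (c • y) = c • u y := by
      intro c y hy
      have h := hu7 c 0 y 0 hy hK0
      simpa [hu0] using h
    -- construction of U
    obtain ⟨U0, hU0⟩ : ∃ U0 : H → H, ∀ f, U0 f = ∑ i, Matrix.single i i0 (1:ℂ) • u (k i f) :=
      ⟨_, fun _ => rfl⟩
    have hkadd : ∀ (i : Fin d) (f g : H), k i (f + g) = k i f + k i g := by
      intro i f g
      rw [hk, hk, hk, smul_add]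
    have hksmul : ∀ (i : Fin d) (c : ℂ) (f : H), k i (c • f) = c • k i f := by
      intro i c f
      rw [hk, hk, hcs]
    have hU0add : ∀ f g : H, U0 (f + g) = U0 f + U0 g := by
      intro f g
      rw [hU0, hU0, hU0, ← Finset.sum_add_distrib]
      refine Finset.sum_congr rfl fun i _ => ?_
      rw [hkadd, huadd _ _ (hkK i f) (hkK i g), smul_add]
    have hU0smul : ∀ (c : ℂ) (f : H), U0 (c • f) = c • U0 f := by
      intro c f
      rw [hU0, hU0, Finset.smul_sum]
      refine Finset.sum_congr rfl fun i _ => ?_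
      rw [hksmul, husmul c _ (hkK i f), hcs]
    refine ⟨{ toFun := U0, map_add' := hU0add, map_smul' := hU0smul }, ?_⟩
    have hUapp : ∀ f : H, U0 f = ∑ i, Matrix.single i i0 (1:ℂ) • u (k i f) := hU0
    have hkU : ∀ (j : Fin d) (f : H), k j (U0 f) = u (k j f) := by
      intro j f
      rw [hk, hUapp, Finset.smul_sum]
      rw [Fintype.sum_eq_single j]
      · rw [hms, Matrix.single_mul_single_same, one_mul, huK]
      · intro i hi
        rw [hms, Matrix.single_mul_single_of_ne (h := Ne.symm hi), zero_smul]
    have hU00 : U0 0 = 0 := by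
      have h := hU0smul 0 0
      simpa using h
    have hUE : ∀ f g : H, E (U0 f) (U0 g) = E f g := by
      intro f g
      ext i j
      rw [hentry, hentry, hkU, hkU, hu6 (k i f) (k j g) (hkK i f) (hkK j g)]
    have hstd : ∀ (p q : Fin d) (f : H), U0 (Matrix.single p q (1:ℂ) • f)
        = Matrix.single p q (1:ℂ) • U0 f := by
      intro p q f
      rw [hU0, hU0, Finset.smul_sum]
      have hL : ∀ i : Fin d, k i (Matrix.single p q (1:ℂ) • f)
          = if i = p then k q f else 0 := by
        intro i
        by_cases hip : i = p
        · subst hip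
          rw [if_pos rfl, hk, hk, hms, Matrix.single_mul_single_same, one_mul]
        · rw [if_neg hip, hk, hms, Matrix.single_mul_single_of_ne (h := hip), zero_smul]
      have h1 : ∑ i, Matrix.single i i0 (1:ℂ) • u (k i (Matrix.single p q (1:ℂ) • f))
          = Matrix.single p i0 (1:ℂ) • u (k q f) := by
        rw [Fintype.sum_eq_single p]
        · rw [hL p, if_pos rfl]
        · intro i hi
          rw [hL i, if_neg hi, hu0, smul_zero]
      have h2 : ∑ i, Matrix.single p q (1:ℂ) • (Matrix.single i i0 (1:ℂ) • u (k i f))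
          = Matrix.single p i0 (1:ℂ) • u (k q f) := by
        rw [Fintype.sum_eq_single q]
        · rw [hms, Matrix.single_mul_single_same, one_mul]
        · intro i hi
          rw [hms, Matrix.single_mul_single_of_ne (h := Ne.symm hi), zero_smul]
      rw [h1, h2]
    have hUa0 : ∀ (a : Matrix (Fin d) (Fin d) ℂ) (f : H), U0 (a • f) = a • U0 f := by
      intro a f
      induction a using Matrix.induction_on' with
      | h_zero => rw [zero_smul, hU00, zero_smul]
      | h_add p q hp hq => rw [add_smul, hU0add, hp, hq, add_smul]
      | h_std_basis i j x =>
          have hx : Matrix.single i j x = x • Matrix.single i j (1:ℂ) := by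
            rw [smul_single, smul_eq_mul, mul_one]
          rw [hx, smul_assoc, hU0smul, hstd, smul_assoc]
    have hTzero : T 0 = 0 := by
      have h1 : E (T 0) (T 0) = 0 := by rw [hB 0, (hdef 0).mpr rfl]
      exact (hdef (T 0)).mp h1
    have hnnc : ∀ x : H, (starRingEnd ℂ) (⟪x, x⟫ : ℂ) = ⟪x, x⟫ :=
      fun x => inner_conj_symm x x
    have hphase : ∀ f : H, ∃ c : ℂ, ‖c‖ = 1 ∧ T f = c • U0 f := by
      intro f
      by_cases hf : f = 0
      · refine ⟨1, by norm_num, ?_⟩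
        subst hf
        rw [hTzero, hU00, smul_zero]
      · obtain ⟨p0, hp0⟩ : ∃ p, k p f ≠ 0 := by
          by_contra hall
          push_neg at hall
          apply hf
          have h := hrecon f
          rw [Finset.sum_congr rfl (fun i _ => by rw [hall i, smul_zero]),
            Finset.sum_const_zero] at h
          exact h.symm
        obtain ⟨om, hom⟩ : ∃ om : Fin d → ℂ,
            ∀ p, om p = (⟪u (k p f), k p (T f)⟫ : ℂ) / (⟪k p f, k p f⟫ : ℂ) :=
          ⟨_, fun _ => rfl⟩
        have hnn0 : ∀ p : Fin d, k p f ≠ 0 → (⟪k p f, k p f⟫ : ℂ) ≠ 0 :=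
          fun p hp h => hp (inner_self_eq_zero.mp h)
        have hcmod : ∀ p : Fin d,
            (⟪u (k p f), k p (T f)⟫ : ℂ) * (starRingEnd ℂ) (⟪u (k p f), k p (T f)⟫ : ℂ)
            = (⟪k p f, k p f⟫ : ℂ) * (⟪k p f, k p f⟫ : ℂ) := by
          intro p
          have h := hstarw f (k p f) (hkK p f) p p
          rwa [hnnc (k p f)] at h
        have hap : ∀ p : Fin d, k p (T f) = om p • u (k p f) := by
          intro p
          by_cases hp : k p f = 0
          · have h1 : (⟪k p (T f), k p (T f)⟫ : ℂ) = 0 := by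
              rw [P1, hp, inner_zero_left]
            rw [inner_self_eq_zero.mp h1, hp, hu0, smul_zero]
          · have hcs2 := cs_helper (u (k p f)) (k p (T f)) (⟪k p f, k p f⟫ : ℂ)
              (⟪u (k p f), k p (T f)⟫ : ℂ) (hu1 _ (hkK p f)) (P1 f p p) rfl
              (hcmod p) (hnnc (k p f))
            have hinv := congrArg (fun x => (⟪k p f, k p f⟫ : ℂ)⁻¹ • x) hcs2
            simp only [smul_smul] at hinv
            rw [inv_mul_cancel₀ (hnn0 p hp), one_smul] at hinv
            rw [hom, div_eq_inv_mul]
            exact hinv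
        have homu : ∀ p : Fin d, k p f ≠ 0 → om p * (starRingEnd ℂ) (om p) = 1 := by
          intro p hp
          have hnnp := hnn0 p hp
          rw [hom, map_div₀, hnnc (k p f), div_mul_div_comm, hcmod p, div_self]
          exact mul_ne_zero hnnp hnnp
        have hkey : ∀ (w : H), Matrix.single i0 i0 (1:ℂ) • w = w → ∀ p q : Fin d,
            (om p * (starRingEnd ℂ) (om q) - 1) *
              ((⟪b, k p f⟫ : ℂ) * (starRingEnd ℂ) (⟪b, k q f⟫ : ℂ)
                + (⟪w, k p f⟫ : ℂ) * (starRingEnd ℂ) (⟪w, k q f⟫ : ℂ)) = 0 := by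
          intro w hw p q
          have h := hstar2 f w hw p q
          rw [hap p, hap q] at h
          simp only [inner_smul_right, _root_.map_mul] at h
          rw [hu2 _ (hkK p f), hu2 _ (hkK q f), hu6 (k p f) w (hkK p f) hw,
            hu6 (k q f) w (hkK q f) hw] at h
          linear_combination h
        have hcoh : ∀ p q : Fin d, k p f ≠ 0 → k q f ≠ 0 → om p = om q := by
          intro p q hp hq
          have hnnp := hnn0 p hp
          have hnnq := hnn0 q hq
          have hx : om p * (starRingEnd ℂ) (om q) = 1 := by
            by_contra hne1
            have hfac : ∀ (w : H), Matrix.single i0 i0 (1:ℂ) • w = w →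
                (⟪b, k p f⟫ : ℂ) * (starRingEnd ℂ) (⟪b, k q f⟫ : ℂ)
                + (⟪w, k p f⟫ : ℂ) * (starRingEnd ℂ) (⟪w, k q f⟫ : ℂ) = 0 := by
              intro w hw
              rcases mul_eq_zero.mp (hkey w hw p q) with h1 | h1
              · exact absurd (by linear_combination h1) hne1
              · exact h1
            have hc1 : (starRingEnd ℂ) (⟪k p f, k q f⟫ : ℂ) = ⟪k q f, k p f⟫ :=
              inner_conj_symm _ _
            by_cases hpq : (⟪k q f, k p f⟫ : ℂ) = 0
            · have hw1K := hKadd _ _ (hkK p f) (hkK q f)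
              have hw2K := hKadd _ _ hw1K hw1K
              have h1 := hfac _ hw1K
              have h2 := hfac _ hw2K
              simp only [inner_add_left, _root_.map_add] at h1 h2
              rw [hc1, hnnc (k q f), hpq] at h1 h2
              have h3 : (⟪k p f, k p f⟫ : ℂ) * (⟪k q f, k q f⟫ : ℂ) = 0 := by
                linear_combination (h2 - h1) / 3
              exact (mul_ne_zero hnnp hnnq) h3
            · have h1 := hfac _ (hkK p f)
              have hw2K := hKadd _ _ (hkK p f) (hkK p f)
              have h2 := hfac _ hw2K
              simp only [inner_add_left, _root_.map_add] at h1 h2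
              rw [hc1] at h1 h2
              have h3 : (⟪k p f, k p f⟫ : ℂ) * (⟪k q f, k p f⟫ : ℂ) = 0 := by
                linear_combination (h2 - h1) / 3
              exact (mul_ne_zero hnnp hpq) h3
          have h4 := homu q hq
          have hcq : (starRingEnd ℂ) (om q) ≠ 0 := by
            intro h0
            rw [h0, mul_zero] at h4
            exact zero_ne_one h4
          exact mul_right_cancel₀ hcq (hx.trans h4.symm)
        refine ⟨om p0, unit_of_mul_conj _ (homu p0 hp0), ?_⟩
        have h1 : ∀ i : Fin d, k i (T f) = om p0 • u (k i f) := by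
          intro i
          by_cases hi : k i f = 0
          · have h2 : (⟪k i (T f), k i (T f)⟫ : ℂ) = 0 := by
              rw [P1, hi, inner_zero_left]
            rw [inner_self_eq_zero.mp h2, hi, hu0, smul_zero]
          · rw [hap i, hcoh i p0 hi hp0]
        calc T f = ∑ i, Matrix.single i i0 (1:ℂ) • k i (T f) := (hrecon (T f)).symm
          _ = ∑ i, Matrix.single i i0 (1:ℂ) • (om p0 • u (k i f)) :=
              Finset.sum_congr rfl fun i _ => by rw [h1 i]
          _ = om p0 • ∑ i, Matrix.single i i0 (1:ℂ) • u (k i f) := by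
              rw [Finset.smul_sum]
              exact Finset.sum_congr rfl fun i _ => hcs _ _ _
          _ = om p0 • U0 f := by rw [hU0]
    choose φ hφ1 hφ2 using hphase
    refine ⟨φ, ?_, ?_, hφ1, ?_⟩
    · intro a f
      show U0 (a • f) = a • U0 f
      exact hUa0 a f
    · intro f f'
      show E (U0 f) (U0 f') = E f f'
      exact hUE f f'
    · intro f
      show T f = φ f • U0 f
      exact hφ2 f
end

section
/- Let A = M_d(ℂ) and ℋ a Hilbert A-module, and let {f_α} be a modular orthonormal set in ℋ (each [f_α, f_α] is a nonzero minimal projection in A, and [f_α, f_β] = 0 for α ≠ β). Then the orthogonal projection P onto the closed submodule generated by {f_α} is A-linear and satisfies P = ∑_α f_α ⊙ f_α, where (f ⊙ g)h = [h, g] f. -/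
open scoped ComplexOrder
open Matrix

variable {d : ℕ} {H : Type*} [NormedAddCommGroup H] [InnerProductSpace ℂ H]
  [CompleteSpace H] [Module (Matrix (Fin d) (Fin d) ℂ) H]
  [IsScalarTower ℂ (Matrix (Fin d) (Fin d) ℂ) H]

/-- The hypotheses making `(H, E)` a Hilbert C*-module over `M_d(ℂ)`, realized as a
Hilbert space via `⟨f, g⟩ = tr [g, f]` (inner ℂ product linear in the second variable). -/
structure IsHilbertModule (d : ℕ) (H : Type*) [NormedAddCommGroup H]
    [InnerProductSpace ℂ H] [Module (Matrix (Fin d) (Fin d) ℂ) H]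
    (E : H → H → Matrix (Fin d) (Fin d) ℂ) : Prop where
  add_left : ∀ f g h : H, E (f + g) h = E f h + E g h
  smul_left : ∀ (a : Matrix (Fin d) (Fin d) ℂ) (f g : H), E (a • f) g = a * E f g
  star_comm : ∀ f g : H, E g f = (E f g)ᴴ
  posSemidef : ∀ f : H, (E f f).PosSemidef
  definite : ∀ f : H, E f f = 0 ↔ f = 0
  inner_eq : ∀ f g : H, (inner ℂ f g : ℂ) = (E g f).trace

/-- `{f_α}` is a modular orthonormal family: each `[f_α, f_α]` is a minimal (rank-one)
projection in `M_d(ℂ)` and `[f_α, f_β] = 0` for `α ≠ β`. -/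
structure IsModularOrthonormal (d : ℕ) {H : Type*} {ι : Type*} [AddCommMonoid H]
    [Module (Matrix (Fin d) (Fin d) ℂ) H]
    (E : H → H → Matrix (Fin d) (Fin d) ℂ) (f : ι → H) : Prop where
  idem : ∀ i, E (f i) (f i) * E (f i) (f i) = E (f i) (f i)
  herm : ∀ i, (E (f i) (f i))ᴴ = E (f i) (f i)
  rank_one : ∀ i, (E (f i) (f i)).rank = 1
  orth : ∀ i j, i ≠ j → E (f i) (f j) = 0

namespace Stmt8Aux
set_option linter.unusedSectionVars false

local notation "𝕄" => Matrix (Fin d) (Fin d) ℂ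

lemma trace_mul_single (M : 𝕄) (i j : Fin d) :
    (M * Matrix.single j i (1:ℂ)).trace = M i j := by
  classical
  rw [Matrix.trace, Finset.sum_eq_single i]
  · simp [Matrix.diag]
  · intro k _ hk
    simpa [Matrix.diag] using
      Matrix.mul_single_apply_of_ne (c := (1:ℂ)) j i k k hk M
  · simp

lemma trace_ext {M N : 𝕄} (h : ∀ c : 𝕄, (M * cᴴ).trace = (N * cᴴ).trace) : M = N := by
  ext i j
  have := h (Matrix.single j i (1:ℂ))ᴴ
  rwa [conjTranspose_conjTranspose, trace_mul_single, trace_mul_single] at this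

lemma trace_conjTranspose_mul_self (X : 𝕄) :
    (Xᴴ * X).trace = ((∑ i, ∑ j, ‖X i j‖^2 : ℝ) : ℂ) := by
  classical
  rw [Matrix.trace]
  push_cast
  rw [Finset.sum_comm]
  refine Finset.sum_congr rfl fun i _ => ?_
  simp only [Matrix.diag, Matrix.mul_apply, Matrix.conjTranspose_apply]
  refine Finset.sum_congr rfl fun j _ => ?_
  rw [mul_comm]; exact Complex.mul_conj' (X j i)

variable {E : H → H → Matrix (Fin d) (Fin d) ℂ}

lemma zero_left (hE : IsHilbertModule d H E) (g : H) : E 0 g = 0 := by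
  have h := hE.add_left 0 0 g
  rw [add_zero] at h
  exact (left_eq_add.mp h)

lemma neg_left (hE : IsHilbertModule d H E) (x g : H) : E (-x) g = -(E x g) := by
  have h := hE.add_left x (-x) g
  rw [add_neg_cancel, zero_left hE] at h
  exact (neg_eq_of_add_eq_zero_right h.symm).symm

lemma sub_left (hE : IsHilbertModule d H E) (x y g : H) :
    E (x - y) g = E x g - E y g := by
  rw [sub_eq_add_neg, hE.add_left, neg_left hE, sub_eq_add_neg]

lemma smul_right (hE : IsHilbertModule d H E) (x y : H) (a : 𝕄) :
    E x (a • y) = E x y * aᴴ := by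
  rw [hE.star_comm (a • y) x, hE.smul_left, conjTranspose_mul, ← hE.star_comm]

lemma norm_smul_sq_le (hE : IsHilbertModule d H E) (a : 𝕄) (x : H) :
    ‖a • x‖^2 ≤ (a * aᴴ).trace.re * ‖x‖^2 := by
  classical
  obtain ⟨B, hB⟩ : ∃ B : 𝕄, E x x = Bᴴ * B := by
    open scoped MatrixOrder Matrix.Norms.L2Operator in
    exact CStarAlgebra.nonneg_iff_eq_star_mul_self.mp (hE.posSemidef x).nonneg
  have e1 : E (a • x) (a • x) = (B * aᴴ)ᴴ * (B * aᴴ) := by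
    rw [hE.smul_left, smul_right hE, hB, conjTranspose_mul, conjTranspose_conjTranspose]
    simp only [Matrix.mul_assoc]
  have hx : (‖a • x‖:ℝ)^2 = ∑ i, ∑ j, ‖(B * aᴴ) i j‖^2 := by
    have h1 := inner_self_eq_norm_sq (𝕜 := ℂ) (a • x)
    rw [hE.inner_eq, e1, trace_conjTranspose_mul_self] at h1
    simpa [RCLike.re_to_complex, ← Complex.ofReal_pow, Complex.ofReal_re] using h1.symm
  have hx2 : (‖x‖:ℝ)^2 = ∑ i, ∑ j, ‖B i j‖^2 := by
    have h1 := inner_self_eq_norm_sq (𝕜 := ℂ) x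
    rw [hE.inner_eq, hB, trace_conjTranspose_mul_self] at h1
    simpa [RCLike.re_to_complex, ← Complex.ofReal_pow, Complex.ofReal_re] using h1.symm
  have ha : (a * aᴴ).trace.re = ∑ i, ∑ j, ‖aᴴ i j‖^2 := by
    have h1 := trace_conjTranspose_mul_self (aᴴ)
    rw [conjTranspose_conjTranspose] at h1
    rw [h1, Complex.ofReal_re]
  have entry : ∀ i j, ‖(B * aᴴ) i j‖^2 ≤ (∑ k, ‖B i k‖^2) * (∑ k, ‖aᴴ k j‖^2) := by
    intro i j
    have h1 : ‖(B * aᴴ) i j‖ ≤ ∑ k, ‖B i k‖ * ‖aᴴ k j‖ := by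
      rw [Matrix.mul_apply]
      refine (norm_sum_le _ _).trans ?_
      exact le_of_eq (Finset.sum_congr rfl fun k _ => norm_mul _ _)
    calc ‖(B * aᴴ) i j‖^2 ≤ (∑ k, ‖B i k‖ * ‖aᴴ k j‖)^2 :=
          pow_le_pow_left₀ (norm_nonneg _) h1 2
      _ ≤ _ := Finset.sum_mul_sq_le_sq_mul_sq _ _ _
  rw [hx, ha, hx2]
  calc ∑ i, ∑ j, ‖(B * aᴴ) i j‖^2
      ≤ ∑ i, ∑ j, (∑ k, ‖B i k‖^2) * (∑ k, ‖aᴴ k j‖^2) :=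
        Finset.sum_le_sum fun i _ => Finset.sum_le_sum fun j _ => entry i j
    _ = (∑ i, ∑ k, ‖B i k‖^2) * (∑ j, ∑ k, ‖aᴴ k j‖^2) := by
        rw [Finset.sum_mul_sum]
    _ = (∑ i, ∑ j, ‖aᴴ i j‖^2) * ∑ i, ∑ j, ‖B i j‖^2 := by
        rw [mul_comm, Finset.sum_comm (f := fun k j => ‖aᴴ k j‖^2)]

lemma trace_re_nonneg (a : 𝕄) : 0 ≤ (a * aᴴ).trace.re := by
  have h1 := trace_conjTranspose_mul_self (aᴴ)
  rw [conjTranspose_conjTranspose] at h1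
  rw [h1, Complex.ofReal_re]
  positivity

lemma continuous_matSmul (hE : IsHilbertModule d H E) (a : 𝕄) :
    Continuous fun x : H => a • x := by
  have hmap : ∀ (c : ℂ) (x : H), a • (c • x) = c • (a • x) := by
    intro c x
    have h1 : c • x = (c • (1:𝕄)) • x := by rw [smul_assoc, one_smul]
    have h2 : c • (a • x) = (c • a) • x := by rw [smul_assoc]
    rw [h1, ← mul_smul, mul_smul_comm, mul_one, h2]
  let L : H →ₗ[ℂ] H :=
    { toFun := fun x => a • x
      map_add' := smul_add a
      map_smul' := fun c x => hmap c x }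
  have hb : ∀ x, ‖L x‖ ≤ Real.sqrt ((a * aᴴ).trace.re) * ‖x‖ := by
    intro x
    calc ‖a • x‖ = Real.sqrt (‖a • x‖^2) := (Real.sqrt_sq (norm_nonneg _)).symm
      _ ≤ Real.sqrt ((a * aᴴ).trace.re * ‖x‖^2) := Real.sqrt_le_sqrt (norm_smul_sq_le hE a x)
      _ = Real.sqrt ((a * aᴴ).trace.re) * ‖x‖ := by
          rw [Real.sqrt_mul (trace_re_nonneg a), Real.sqrt_sq (norm_nonneg _)]
  exact (L.mkContinuous _ hb).continuous

end Stmt8Aux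

/-- The orthogonal projection onto the closed submodule generated by a modular
orthonormal family `{f_α}` is `A`-linear and equals `∑_α f_α ⊙ f_α`,
where `(f ⊙ g) h = [h, g] f`. -/
theorem stmt8 (E : H → H → Matrix (Fin d) (Fin d) ℂ) (hE : IsHilbertModule d H E)
    {ι : Type*} (f : ι → H) (hf : IsModularOrthonormal d E f)
    (P : H → H)
    (hP1 : ∀ x : H, P x ∈
      closure ((Submodule.span (Matrix (Fin d) (Fin d) ℂ) (Set.range f) : Submodule _ H) : Set H))
    (hP2 : ∀ x : H, ∀ y ∈
      closure ((Submodule.span (Matrix (Fin d) (Fin d) ℂ) (Set.range f) : Submodule _ H) : Set H),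
      (inner ℂ (x - P x) y : ℂ) = 0) :
    (∀ x y : H, P (x + y) = P x + P y) ∧
    (∀ (a : Matrix (Fin d) (Fin d) ℂ) (x : H), P (a • x) = a • P x) ∧
    ∀ h : H, HasSum (fun i => E h (f i) • f i) (P h) := by
  classical
  set S : Submodule (Matrix (Fin d) (Fin d) ℂ) H :=
    Submodule.span (Matrix (Fin d) (Fin d) ℂ) (Set.range f) with hS
  let Sc : Submodule ℂ H := S.restrictScalars ℂ
  have hiff : ∀ z : H, z ∈ closure (S : Set H) ↔ z ∈ Sc.topologicalClosure := by
    intro z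
    constructor
    · intro hz
      show z ∈ (Sc.topologicalClosure : Set H)
      rw [Submodule.topologicalClosure_coe]
      exact hz
    · intro hz
      have h1 : z ∈ (Sc.topologicalClosure : Set H) := hz
      rwa [Submodule.topologicalClosure_coe] at h1
  have uniq : ∀ x y₁ y₂ : H, y₁ ∈ closure (S : Set H) → y₂ ∈ closure (S : Set H) →
      (∀ z ∈ closure (S : Set H), (inner ℂ (x - y₁) z : ℂ) = 0) →
      (∀ z ∈ closure (S : Set H), (inner ℂ (x - y₂) z : ℂ) = 0) → y₁ = y₂ := by
    intro x y₁ y₂ h1 h2 o1 o2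
    have hz : y₁ - y₂ ∈ closure (S : Set H) := by
      rw [hiff] at h1 h2 ⊢
      exact sub_mem h1 h2
    have h0 : (inner ℂ (y₁ - y₂) (y₁ - y₂) : ℂ) = 0 := by
      have e : (inner ℂ (y₁ - y₂) (y₁ - y₂) : ℂ)
          = (inner ℂ (x - y₂) (y₁ - y₂) : ℂ) - (inner ℂ (x - y₁) (y₁ - y₂) : ℂ) := by
        rw [← inner_sub_left]
        congr 1
        abel
      rw [e, o2 _ hz, o1 _ hz, sub_zero]
    exact sub_eq_zero.mp (inner_self_eq_zero.mp h0)
  have Ew : ∀ x : H, ∀ z ∈ S, E z (x - P x) = 0 := by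
    intro x z hz
    refine Stmt8Aux.trace_ext fun c => ?_
    rw [Matrix.zero_mul, Matrix.trace_zero, Matrix.trace_mul_comm]
    have h0 := hP2 x (cᴴ • z) (subset_closure (S.smul_mem cᴴ hz))
    rw [hE.inner_eq, hE.smul_left] at h0
    exact h0
  refine ⟨?_, ?_, ?_⟩
  · -- additivity
    intro x y
    refine uniq (x + y) _ _ (hP1 _) ?_ (hP2 _) ?_
    · exact (hiff _).mpr (add_mem ((hiff _).mp (hP1 x)) ((hiff _).mp (hP1 y)))
    · intro z hz
      have e : x + y - (P x + P y) = (x - P x) + (y - P y) := by abel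
      rw [e, inner_add_left, hP2 x z hz, hP2 y z hz, add_zero]
  · -- A-linearity
    intro a x
    refine uniq (a • x) _ _ (hP1 _) ?_ ?_ ?_
    · exact map_mem_closure (Stmt8Aux.continuous_matSmul hE a) (hP1 x)
        (fun z hz => S.smul_mem a hz)
    · exact hP2 _
    · intro z hz
      have e : a • x - a • P x = a • (x - P x) := (smul_sub a x (P x)).symm
      rw [e]
      have hspan : ∀ z ∈ (S : Set H), (inner ℂ (a • (x - P x)) z : ℂ) = 0 := by
        intro z hz
        rw [hE.inner_eq, Stmt8Aux.smul_right hE, Ew x z hz, Matrix.zero_mul,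
          Matrix.trace_zero]
      have hclosed : IsClosed {z : H | (inner ℂ (a • (x - P x)) z : ℂ) = 0} :=
        isClosed_eq (Continuous.inner continuous_const continuous_id) continuous_const
      exact closure_minimal hspan hclosed hz
  · -- the sum formula
    intro h
    set g : ι → H := fun i => E h (f i) • f i with hg
    have hpf : ∀ i, E (f i) (f i) • f i = f i := by
      intro i
      have h0 : E (((1 : Matrix (Fin d) (Fin d) ℂ) - E (f i) (f i)) • f i)
          (((1 : Matrix (Fin d) (Fin d) ℂ) - E (f i) (f i)) • f i) = 0 := by
        rw [hE.smul_left, Stmt8Aux.smul_right hE, conjTranspose_sub, conjTranspose_one,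
          hf.herm]
        have hz : E (f i) (f i) * ((1 : Matrix (Fin d) (Fin d) ℂ) - E (f i) (f i)) = 0 := by
          rw [mul_sub, mul_one, hf.idem i, sub_self]
        rw [hz, mul_zero]
      have h1 := (hE.definite _).mp h0
      rw [sub_smul, one_smul, sub_eq_zero] at h1
      exact h1.symm
    have hap : ∀ (x : H) i, E x (f i) * E (f i) (f i) = E x (f i) := by
      intro x i
      conv_lhs => rw [← hf.herm i]
      rw [← Stmt8Aux.smul_right hE, hpf i]
    have hgf : ∀ i j, E (g i) (f j) = if i = j then E h (f i) else 0 := by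
      intro i j
      have h1 : E (g i) (f j) = E h (f i) * E (f i) (f j) := hE.smul_left _ _ _
      rw [h1]
      by_cases e : i = j
      · subst e
        rw [if_pos rfl, hap h i]
      · rw [if_neg e, hf.orth i j e, mul_zero]
    have hEgg : ∀ i j, E (g i) (g j) = if i = j then E h (f i) * (E h (f i))ᴴ else 0 := by
      intro i j
      have h1 : E (g i) (g j) = E (g i) (f j) * (E h (f j))ᴴ :=
        Stmt8Aux.smul_right hE (g i) (f j) (E h (f j))
      rw [h1, hgf i j]
      by_cases e : i = j
      · subst e
        rw [if_pos rfl, if_pos rfl]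
      · rw [if_neg e, if_neg e, Matrix.zero_mul]
    have htreal : ∀ i, (E h (f i) * (E h (f i))ᴴ).trace
        = (((E h (f i) * (E h (f i))ᴴ).trace.re : ℝ) : ℂ) := by
      intro i
      have h1 := Stmt8Aux.trace_conjTranspose_mul_self (E h (f i))ᴴ
      rw [conjTranspose_conjTranspose] at h1
      rw [h1, Complex.ofReal_re]
    have hnorm : ∀ i, ‖g i‖ ^ 2 = (E h (f i) * (E h (f i))ᴴ).trace.re := by
      intro i
      have h1 := inner_self_eq_norm_sq (𝕜 := ℂ) (g i)
      rw [hE.inner_eq, hEgg i i, if_pos rfl] at h1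
      simpa [RCLike.re_to_complex] using h1.symm
    have hgh : ∀ i, (inner ℂ h (g i) : ℂ) = ((‖g i‖ ^ 2 : ℝ) : ℂ) := by
      intro i
      rw [hE.inner_eq]
      have h1 : E (g i) h = E h (f i) * (E h (f i))ᴴ := by
        have h2 : E (g i) h = E h (f i) * E (f i) h := hE.smul_left _ _ _
        rw [h2, hE.star_comm h (f i)]
      rw [h1, htreal i, hnorm i]
    have hgg : ∀ i j, (inner ℂ (g i) (g j) : ℂ) = if j = i then ((‖g i‖ ^ 2 : ℝ) : ℂ) else 0 := by
      intro i j
      rw [hE.inner_eq, hEgg j i]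
      by_cases e : j = i
      · subst e
        rw [if_pos rfl, if_pos rfl, htreal j, hnorm j]
      · rw [if_neg e, if_neg e, Matrix.trace_zero]
    have hvv : ∀ s : Finset ι,
        (inner ℂ (∑ i ∈ s, g i) (∑ i ∈ s, g i) : ℂ) = ((∑ i ∈ s, ‖g i‖ ^ 2 : ℝ) : ℂ) := by
      intro s
      rw [sum_inner, Complex.ofReal_sum]
      refine Finset.sum_congr rfl fun i hi => ?_
      rw [inner_sum]
      calc ∑ j ∈ s, (inner ℂ (g i) (g j) : ℂ)
          = ∑ j ∈ s, if j = i then ((‖g j‖ ^ 2 : ℝ) : ℂ) else 0 := by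
            refine Finset.sum_congr rfl fun j _ => ?_
            rw [hgg i j]
            split_ifs with e
            · subst e; rfl
            · rfl
        _ = if i ∈ s then ((‖g i‖ ^ 2 : ℝ) : ℂ) else 0 := Finset.sum_ite_eq' s i _
        _ = ((‖g i‖ ^ 2 : ℝ) : ℂ) := by rw [if_pos hi]
    have hhv : ∀ s : Finset ι,
        (inner ℂ h (∑ i ∈ s, g i) : ℂ) = ((∑ i ∈ s, ‖g i‖ ^ 2 : ℝ) : ℂ) := by
      intro s
      rw [inner_sum, Complex.ofReal_sum]
      exact Finset.sum_congr rfl fun i _ => hgh i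
    have hvh : ∀ s : Finset ι,
        (inner ℂ (∑ i ∈ s, g i) h : ℂ) = ((∑ i ∈ s, ‖g i‖ ^ 2 : ℝ) : ℂ) := by
      intro s
      rw [← inner_conj_symm, hhv s]
      exact Complex.conj_ofReal _
    have hnormsum : ∀ s : Finset ι, ‖∑ i ∈ s, g i‖ ^ 2 = ∑ i ∈ s, ‖g i‖ ^ 2 := by
      intro s
      have h1 := inner_self_eq_norm_sq (𝕜 := ℂ) (∑ i ∈ s, g i)
      rw [hvv s, RCLike.re_to_complex, Complex.ofReal_re] at h1
      exact h1.symm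
    have hbessel : ∀ s : Finset ι, ∑ i ∈ s, ‖g i‖ ^ 2 ≤ ‖h‖ ^ 2 := by
      intro s
      have h1 := inner_self_eq_norm_sq (𝕜 := ℂ) (h - ∑ i ∈ s, g i)
      rw [inner_sub_sub_self, hhv s, hvh s, hvv s] at h1
      have h2 : (inner ℂ h h : ℂ).re = ‖h‖ ^ 2 := by
        have h3 := inner_self_eq_norm_sq (𝕜 := ℂ) h
        simpa [RCLike.re_to_complex] using h3
      have h3 : ‖h‖ ^ 2 - ∑ i ∈ s, ‖g i‖ ^ 2 = ‖h - ∑ i ∈ s, g i‖ ^ 2 := by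
        rw [← h1, RCLike.re_to_complex]
        simp only [Complex.add_re, Complex.sub_re, Complex.ofReal_re, h2]
        ring
      nlinarith [sq_nonneg ‖h - ∑ i ∈ s, g i‖]
    have hsumm : Summable fun i => ‖g i‖ ^ 2 :=
      summable_of_sum_le (fun i => sq_nonneg _) hbessel
    have hgsum : Summable g := by
      rw [summable_iff_vanishing]
      intro e he
      obtain ⟨ε, hε, hball⟩ := Metric.mem_nhds_iff.mp he
      obtain ⟨s, hs⟩ := (summable_iff_vanishing.mp hsumm) (Metric.ball 0 (ε ^ 2))
        (Metric.ball_mem_nhds 0 (by positivity))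
      refine ⟨s, fun t ht => hball ?_⟩
      have h1 : ∑ i ∈ t, ‖g i‖ ^ 2 < ε ^ 2 := by
        have h2 := hs t ht
        rw [Metric.mem_ball, Real.dist_eq, sub_zero] at h2
        exact lt_of_le_of_lt (le_abs_self _) h2
      have h4 : ‖∑ i ∈ t, g i‖ ^ 2 < ε ^ 2 := by rw [hnormsum t]; exact h1
      rw [Metric.mem_ball, dist_zero_right]
      nlinarith [norm_nonneg (∑ i ∈ t, g i)]
    obtain ⟨L, hL⟩ := hgsum
    have hLmem : L ∈ closure (S : Set H) := by
      refine mem_closure_of_tendsto hL (Filter.Eventually.of_forall fun s => ?_)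
      exact Submodule.sum_mem _ fun i _ =>
        S.smul_mem _ (Submodule.subset_span ⟨i, rfl⟩)
    have hLf : ∀ j, E L (f j) = E h (f j) := by
      intro j
      refine Stmt8Aux.trace_ext fun c => ?_
      have hcsum : HasSum (fun i => (inner ℂ (c • f j) (g i) : ℂ)) (inner ℂ (c • f j) L) := by
        simpa using hL.mapL (innerSL ℂ (c • f j))
      have hterm : (fun i => (inner ℂ (c • f j) (g i) : ℂ))
          = fun i => if i = j then (E h (f j) * cᴴ).trace else 0 := by
        funext i
        rw [hE.inner_eq, Stmt8Aux.smul_right hE, hgf i j]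
        by_cases e : i = j
        · subst e
          rw [if_pos rfl, if_pos rfl]
        · rw [if_neg e, if_neg e, Matrix.zero_mul, Matrix.trace_zero]
      have h2 : HasSum (fun i => (inner ℂ (c • f j) (g i) : ℂ)) ((E h (f j) * cᴴ).trace) := by
        rw [hterm]
        exact hasSum_ite_eq j _
      have h3 := h2.unique hcsum
      rw [hE.inner_eq, Stmt8Aux.smul_right hE] at h3
      exact h3.symm
    have hworth : ∀ z ∈ closure (S : Set H), (inner ℂ (h - L) z : ℂ) = 0 := by
      have hwf : ∀ j, E (h - L) (f j) = 0 := by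
        intro j
        rw [Stmt8Aux.sub_left hE, hLf j, sub_self]
      have hspan : ∀ z ∈ S, E z (h - L) = 0 := by
        intro z hz
        induction hz using Submodule.span_induction with
        | mem z hz =>
          obtain ⟨j, rfl⟩ := hz
          rw [hE.star_comm (h - L) (f j), hwf j, conjTranspose_zero]
        | zero => exact Stmt8Aux.zero_left hE _
        | add x y _ _ hx hy => rw [hE.add_left, hx, hy, add_zero]
        | smul a x _ hx => rw [hE.smul_left, hx, mul_zero]
      have hclosed : IsClosed {z : H | (inner ℂ (h - L) z : ℂ) = 0} :=
        isClosed_eq (Continuous.inner continuous_const continuous_id) continuous_const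
      intro z hz
      refine closure_minimal (fun w hw => ?_) hclosed hz
      show (inner ℂ (h - L) w : ℂ) = 0
      rw [hE.inner_eq, hspan w hw, Matrix.trace_zero]
    have hPL : P h = L := uniq h (P h) L (hP1 h) hLmem (hP2 h) hworth
    rw [hPL]
    exact hL
end

section
/- Let A = M_d(ℂ), ℋ a Hilbert A-module, M ⊂ ℋ a closed submodule generated by a modular orthonormal system {f_α}. Then a vector k ∈ ℋ belongs to M if and only if [k, k] = ∑_α [k, f_α][f_α, k]. -/
open scoped ComplexOrder InnerProductSpace
set_option linter.unusedSectionVars false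
open Matrix

variable {d : ℕ} {H : Type*} [NormedAddCommGroup H] [InnerProductSpace ℂ H]
  [CompleteSpace H] [Module (Matrix (Fin d) (Fin d) ℂ) H]
  [IsScalarTower ℂ (Matrix (Fin d) (Fin d) ℂ) H]

namespace Stmt10Aux

variable {E : H → H → Matrix (Fin d) (Fin d) ℂ}

theorem E_zero_left (hE : IsHilbertModule d H E) (g : H) : E 0 g = 0 := by
  have h := hE.add_left 0 0 g
  rw [add_zero] at h
  exact (left_eq_add.mp h)

theorem E_neg_left (hE : IsHilbertModule d H E) (x g : H) : E (-x) g = -E x g := by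
  have h := hE.add_left x (-x) g
  rw [add_neg_cancel, E_zero_left hE] at h
  exact (neg_eq_of_add_eq_zero_right h.symm).symm

theorem E_sub_left (hE : IsHilbertModule d H E) (x y g : H) : E (x - y) g = E x g - E y g := by
  rw [sub_eq_add_neg, hE.add_left, E_neg_left hE, sub_eq_add_neg]

theorem E_zero_right (hE : IsHilbertModule d H E) (g : H) : E g 0 = 0 := by
  rw [hE.star_comm, E_zero_left hE, conjTranspose_zero]

theorem E_add_right (hE : IsHilbertModule d H E) (x g h : H) :
    E x (g + h) = E x g + E x h := by
  rw [hE.star_comm, hE.add_left, conjTranspose_add, ← hE.star_comm, ← hE.star_comm]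

theorem E_sub_right (hE : IsHilbertModule d H E) (x g h : H) :
    E x (g - h) = E x g - E x h := by
  rw [hE.star_comm, E_sub_left hE, conjTranspose_sub, ← hE.star_comm, ← hE.star_comm]

theorem E_smul_right (hE : IsHilbertModule d H E) (a : Matrix (Fin d) (Fin d) ℂ) (x g : H) :
    E x (a • g) = E x g * aᴴ := by
  rw [hE.star_comm, hE.smul_left, conjTranspose_mul, ← hE.star_comm]

theorem E_entry (hE : IsHilbertModule d H E) (x y : H) (a b : Fin d) :
    E x y a b = ⟪(Matrix.single b a (1:ℂ))ᴴ • y, x⟫_ℂ := by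
  rw [hE.inner_eq, E_smul_right hE, conjTranspose_conjTranspose]
  simp [Matrix.trace, Matrix.mul_apply, Matrix.single, Matrix.diag, ite_and,
    Finset.sum_ite_eq, Finset.sum_ite_eq']

section Modular

variable {ι : Type*} {f : ι → H}

theorem f_proj (hE : IsHilbertModule d H E) (hf : IsModularOrthonormal d E f) (i : ι) :
    E (f i) (f i) • f i = f i := by
  have h : E (f i - E (f i) (f i) • f i) (f i - E (f i) (f i) • f i) = 0 := by
    rw [E_sub_left hE, E_sub_right hE, E_sub_right hE, hE.smul_left, E_smul_right hE,
      E_smul_right hE, hE.smul_left, hf.herm, hf.idem, hf.idem]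
    abel
  have := (hE.definite _).mp h
  rw [sub_eq_zero] at this
  exact this.symm

theorem p_mul (hE : IsHilbertModule d H E) (hf : IsModularOrthonormal d E f) (i : ι) (x : H) :
    E (f i) (f i) * E (f i) x = E (f i) x := by
  conv_rhs => rw [← f_proj hE hf i, hE.smul_left]

theorem mul_p (hE : IsHilbertModule d H E) (hf : IsModularOrthonormal d E f) (i : ι) (x : H) :
    E x (f i) * E (f i) (f i) = E x (f i) := by
  conv_rhs => rw [← f_proj hE hf i, E_smul_right hE, hf.herm]

end Modular

end Stmt10Aux
open Stmt10Aux in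
/-- A vector `k` belongs to the closed submodule generated by a modular orthonormal
system `{f_α}` iff `[k, k] = ∑_α [k, f_α][f_α, k]`. -/
theorem stmt10 (E : H → H → Matrix (Fin d) (Fin d) ℂ) (hE : IsHilbertModule d H E)
    {ι : Type*} (f : ι → H) (hf : IsModularOrthonormal d E f) (k : H) :
    k ∈ closure
        ((Submodule.span (Matrix (Fin d) (Fin d) ℂ) (Set.range f) : Submodule _ H) : Set H) ↔
      HasSum (fun i => E k (f i) * E (f i) k) (E k k) := by
  classical
  set T : ι → H := fun i => E k (f i) • f i with hT
  have hTE : ∀ i (x : H), E (T i) x = E k (f i) * E (f i) x := fun i x => hE.smul_left _ _ _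
  have hstar : ∀ (x y : H), (E x y)ᴴ = E y x := fun x y => (hE.star_comm x y).symm
  have hE_fi_Ti : ∀ i, E (f i) (T i) = E (f i) k := by
    intro i
    rw [show T i = E k (f i) • f i from rfl, E_smul_right hE, hstar, p_mul hE hf]
  have hETT_self : ∀ i, E (T i) (T i) = E k (f i) * E (f i) k := by
    intro i; rw [hTE, hE_fi_Ti]
  have hETT_ne : ∀ i j, i ≠ j → E (T i) (T j) = 0 := by
    intro i j hij
    rw [hTE, show T j = E k (f j) • f j from rfl, E_smul_right hE, hf.orth i j hij, zero_mul,
      mul_zero]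
  have hETk : ∀ i, E (T i) k = E k (f i) * E (f i) k := fun i => hTE i k
  have hin : ∀ x y : H, ⟪x, y⟫_ℂ = (E y x).trace := hE.inner_eq
  have hSelf : ∀ x : H, ⟪x, x⟫_ℂ = ((‖x‖ ^ 2 : ℝ) : ℂ) := by
    intro x; rw [inner_self_eq_norm_sq_to_K]; norm_cast
  set c : ι → ℝ := fun i => ‖T i‖ ^ 2 with hcdef
  have hc : ∀ i, (E k (f i) * E (f i) k).trace = (c i : ℂ) := by
    intro i
    rw [← hETT_self i, ← hin (T i) (T i), inner_self_eq_norm_sq_to_K]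
    norm_cast
  have hkT : ∀ i, ⟪k, T i⟫_ℂ = (c i : ℂ) := by intro i; rw [hin, hETk, hc]
  have hTT : ∀ i, ⟪T i, T i⟫_ℂ = (c i : ℂ) := by intro i; rw [hin, hETT_self, hc]
  have hTTne : ∀ i j, i ≠ j → ⟪T i, T j⟫_ℂ = 0 := by
    intro i j hij; rw [hin, hETT_ne j i (Ne.symm hij), Matrix.trace_zero]
  have hQQ : ∀ s : Finset ι, ⟪∑ i ∈ s, T i, ∑ i ∈ s, T i⟫_ℂ = ∑ i ∈ s, (c i : ℂ) := by
    intro s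
    rw [sum_inner]
    refine Finset.sum_congr rfl fun i hi => ?_
    rw [inner_sum, Finset.sum_eq_single_of_mem i hi fun j _ hne => hTTne i j (Ne.symm hne), hTT]
  have hkQ : ∀ s : Finset ι, ⟪k, ∑ i ∈ s, T i⟫_ℂ = ∑ i ∈ s, (c i : ℂ) := by
    intro s; rw [inner_sum]; exact Finset.sum_congr rfl fun i _ => hkT i
  have hnormQ : ∀ s : Finset ι, ‖∑ i ∈ s, T i‖ ^ 2 = ∑ i ∈ s, c i := by
    intro s
    have h := hQQ s
    have hcast : ∑ i ∈ s, ((c i : ℝ) : ℂ) = ((∑ i ∈ s, c i : ℝ) : ℂ) := by push_cast; ring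
    rw [hSelf, hcast] at h
    exact_mod_cast h
  have bessel : ∀ s : Finset ι, ∑ i ∈ s, c i ≤ ‖k‖ ^ 2 := by
    intro s
    have hcast : ∑ i ∈ s, (c i : ℂ) = ((∑ i ∈ s, c i : ℝ) : ℂ) := by push_cast; ring
    have h2 : ⟪∑ i ∈ s, T i, k⟫_ℂ = ((∑ i ∈ s, c i : ℝ) : ℂ) := by
      rw [← inner_conj_symm, hkQ, hcast, Complex.conj_ofReal]
    have expand : ⟪k - ∑ i ∈ s, T i, k - ∑ i ∈ s, T i⟫_ℂ
        = ((‖k‖ ^ 2 - ∑ i ∈ s, c i : ℝ) : ℂ) := by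
      rw [inner_sub_left, inner_sub_right, inner_sub_right, hkQ, hQQ, h2, hcast, hSelf]
      push_cast; ring
    rw [hSelf] at expand
    have hreal : ‖k - ∑ i ∈ s, T i‖ ^ 2 = ‖k‖ ^ 2 - ∑ i ∈ s, c i := by
      exact_mod_cast expand
    nlinarith [sq_nonneg ‖k - ∑ i ∈ s, T i‖]
  have hcsum : Summable c := summable_of_sum_le (fun i => sq_nonneg _) bessel
  have hTsum : Summable T := by
    rw [summable_iff_vanishing]
    intro e he
    obtain ⟨ε, hε, hball⟩ := Metric.mem_nhds_iff.mp he
    obtain ⟨s, hs⟩ := summable_iff_vanishing.mp hcsum (Set.Iio (ε ^ 2))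
      (Iio_mem_nhds (by positivity))
    refine ⟨s, fun t ht => ?_⟩
    apply hball
    rw [Metric.mem_ball, dist_zero_right]
    have h1 : ∑ i ∈ t, c i < ε ^ 2 := hs t ht
    have h2 := hnormQ t
    nlinarith [norm_nonneg (∑ i ∈ t, T i)]
  set g := ∑' i, T i with hgdef
  have hg : HasSum T g := hTsum.hasSum
  have hgmem : g ∈ closure
      ((Submodule.span (Matrix (Fin d) (Fin d) ℂ) (Set.range f) : Submodule _ H) : Set H) := by
    refine mem_closure_of_tendsto hg (Filter.Eventually.of_forall fun s => ?_)
    exact Submodule.sum_mem _ fun i _ => Submodule.smul_mem _ _ (Submodule.subset_span ⟨i, rfl⟩)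
  have hEgf : ∀ j, E g (f j) = E k (f j) := by
    intro j
    ext a b
    rw [E_entry hE, E_entry hE]
    have hsum2 : HasSum (fun i => ⟪(Matrix.single b a (1:ℂ))ᴴ • f j, T i⟫_ℂ)
        ⟪(Matrix.single b a (1:ℂ))ᴴ • f j, g⟫_ℂ := by
      simpa using hg.mapL (innerSL ℂ ((Matrix.single b a (1:ℂ))ᴴ • f j))
    have heach : ∀ i, ⟪(Matrix.single b a (1:ℂ))ᴴ • f j, T i⟫_ℂ
        = if i = j then ⟪(Matrix.single b a (1:ℂ))ᴴ • f j, k⟫_ℂ else 0 := by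
      intro i
      by_cases hij : i = j
      · subst hij
        rw [if_pos rfl, hin, hin]
        congr 1
        rw [E_smul_right hE, E_smul_right hE]
        congr 1
        rw [hTE, mul_p hE hf]
      · rw [if_neg hij, hin, E_smul_right hE, hTE, hf.orth i j hij, mul_zero, zero_mul,
          Matrix.trace_zero]
    have hsum3 : HasSum (fun i => ⟪(Matrix.single b a (1:ℂ))ᴴ • f j, T i⟫_ℂ)
        ⟪(Matrix.single b a (1:ℂ))ᴴ • f j, k⟫_ℂ := by
      rw [show (fun i => ⟪(Matrix.single b a (1:ℂ))ᴴ • f j, T i⟫_ℂ)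
          = fun i => if i = j then ⟪(Matrix.single b a (1:ℂ))ᴴ • f j, k⟫_ℂ else 0
          from funext heach]
      exact hasSum_ite_eq j _
    exact hsum2.unique hsum3
  have hEkg : ∀ x ∈ Submodule.span (Matrix (Fin d) (Fin d) ℂ) (Set.range f),
      E (k - g) x = 0 := by
    intro x hx
    induction hx using Submodule.span_induction with
    | mem x hx =>
      obtain ⟨j, rfl⟩ := hx
      rw [E_sub_left hE, hEgf j, sub_self]
    | zero => exact E_zero_right hE _
    | add x y _ _ hx hy => rw [E_add_right hE, hx, hy, add_zero]
    | smul a x _ hx => rw [E_smul_right hE, hx, zero_mul]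
  have horth : ∀ x ∈ closure
      ((Submodule.span (Matrix (Fin d) (Fin d) ℂ) (Set.range f) : Submodule _ H) : Set H),
      ⟪x, k - g⟫_ℂ = 0 := by
    have hcont : Continuous fun x : H => ⟪x, k - g⟫_ℂ :=
      Continuous.inner continuous_id continuous_const
    have heq : Set.EqOn (fun x : H => ⟪x, k - g⟫_ℂ) (fun _ => (0:ℂ))
        ((Submodule.span (Matrix (Fin d) (Fin d) ℂ) (Set.range f) : Submodule _ H) : Set H) := by
      intro x hx
      simp only
      rw [hin, hEkg x hx, Matrix.trace_zero]
    exact fun x hx => heq.closure hcont continuous_const hx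
  constructor
  · intro hk
    have hkg : k = g := by
      have h1 : ⟪k, k - g⟫_ℂ = 0 := horth k hk
      have h2 : ⟪g, k - g⟫_ℂ = 0 := horth g hgmem
      have h3 : ⟪k - g, k - g⟫_ℂ = 0 := by rw [inner_sub_left, h1, h2, sub_zero]
      exact (sub_eq_zero.mp (inner_self_eq_zero.mp h3))
    have hgk : HasSum T k := hkg ▸ hg
    have key : (fun i => E k (f i) * E (f i) k) = fun i => E (T i) k :=
      funext fun i => (hTE i k).symm
    rw [key]
    refine Pi.hasSum.mpr fun a => Pi.hasSum.mpr fun b => ?_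
    simp only [E_entry hE]
    simpa using hgk.mapL (innerSL ℂ ((Matrix.single b a (1:ℂ))ᴴ • k))
  · intro hs
    have hEntries : ∀ a : Fin d,
        HasSum (fun i => (E k (f i) * E (f i) k) a a) (E k k a a) := fun a =>
      Pi.hasSum.mp (Pi.hasSum.mp hs a) a
    have hkk : ⟪k, k⟫_ℂ = ((‖k‖ ^ 2 : ℝ) : ℂ) := hSelf k
    have hC : HasSum (fun i => (c i : ℂ)) ((‖k‖ ^ 2 : ℝ) : ℂ) := by
      have hdiag : HasSum (fun i => ((E k (f i) * E (f i) k).trace : ℂ)) ((E k k).trace) := by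
        simpa [Matrix.trace, Matrix.diag] using
          hasSum_sum (s := (Finset.univ : Finset (Fin d))) fun a _ => hEntries a
      rw [show (fun i => ((E k (f i) * E (f i) k).trace : ℂ)) = fun i => (c i : ℂ)
        from funext hc, ← hin k k, hkk] at hdiag
      exact hdiag
    have hTg : ∀ i, ⟪T i, g⟫_ℂ = (c i : ℂ) := by
      intro i
      have h1 : HasSum (fun j => ⟪T i, T j⟫_ℂ) ⟪T i, g⟫_ℂ := by
        simpa using hg.mapL (innerSL ℂ (T i))
      have heach : ∀ j, ⟪T i, T j⟫_ℂ = if j = i then (c i : ℂ) else 0 := by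
        intro j
        by_cases h : j = i
        · subst h; rw [if_pos rfl, hTT]
        · rw [if_neg h, hTTne i j (Ne.symm h)]
      have h2 : HasSum (fun j => ⟪T i, T j⟫_ℂ) ((c i : ℂ)) := by
        rw [show (fun j => ⟪T i, T j⟫_ℂ) = fun j => if j = i then (c i : ℂ) else 0
          from funext heach]
        exact hasSum_ite_eq i _
      exact h1.unique h2
    have hkg2 : ⟪k, g⟫_ℂ = ((‖k‖ ^ 2 : ℝ) : ℂ) := by
      have h1 : HasSum (fun i => ⟪k, T i⟫_ℂ) ⟪k, g⟫_ℂ := by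
        simpa using hg.mapL (innerSL ℂ k)
      rw [show (fun i => ⟪k, T i⟫_ℂ) = fun i => (c i : ℂ) from funext hkT] at h1
      exact h1.unique hC
    have hgg : ⟪g, g⟫_ℂ = ((‖k‖ ^ 2 : ℝ) : ℂ) := by
      have h1 : HasSum (fun i => ⟪g, T i⟫_ℂ) ⟪g, g⟫_ℂ := by
        simpa using hg.mapL (innerSL ℂ g)
      have heq : ∀ i, ⟪g, T i⟫_ℂ = (c i : ℂ) := by
        intro i; rw [← inner_conj_symm, hTg i, Complex.conj_ofReal]
      rw [show (fun i => ⟪g, T i⟫_ℂ) = fun i => (c i : ℂ) from funext heq] at h1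
      exact h1.unique hC
    have hgk' : ⟪g, k⟫_ℂ = ((‖k‖ ^ 2 : ℝ) : ℂ) := by
      rw [← inner_conj_symm, hkg2, Complex.conj_ofReal]
    have hzero : ⟪k - g, k - g⟫_ℂ = 0 := by
      rw [inner_sub_left, inner_sub_right, inner_sub_right, hkk, hkg2, hgg, hgk']
      ring
    have : k = g := sub_eq_zero.mp (inner_self_eq_zero.mp hzero)
    rw [this]
    exact hgmem
end

section
/- Let H be a complex Hilbert space and φ : F(H) → B(H) a Jordan *-homomorphism (linear, φ(A²) = φ(A)², φ(A*) = φ(A)*) that maps rank-one projections to rank-one projections. Then φ is either a *-homomorphism or a *-antihomomorphism on F(H). -/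
open ContinuousLinearMap Module Submodule

/-- `A` is a finite-rank (bounded) operator. -/
def IsFinRankOp {H : Type*} [NormedAddCommGroup H] [InnerProductSpace ℂ H]
    (A : H →L[ℂ] H) : Prop :=
  FiniteDimensional ℂ (LinearMap.range (A : H →ₗ[ℂ] H))

/-- `P` is a rank-one (orthogonal) projection. -/
def IsRankOneProj {H : Type*} [NormedAddCommGroup H] [InnerProductSpace ℂ H]
    [CompleteSpace H] (P : H →L[ℂ] H) : Prop :=
  P ∘L P = P ∧ ContinuousLinearMap.adjoint P = P ∧
    Module.finrank ℂ (LinearMap.range (P : H →ₗ[ℂ] H)) = 1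

namespace Stmt18Aux
set_option linter.unusedSectionVars false
set_option maxHeartbeats 1000000

variable {H : Type*} [NormedAddCommGroup H] [InnerProductSpace ℂ H] [CompleteSpace H]

local notation "L" => H →L[ℂ] H
local notation "A†" => ContinuousLinearMap.adjoint

lemma isFR_of_le {A : L} {S : Submodule ℂ H} [FiniteDimensional ℂ S]
    (h : ∀ x, A x ∈ S) : IsFinRankOp A := by
  have hle : LinearMap.range (A : H →ₗ[ℂ] H) ≤ S := by
    rintro y ⟨x, rfl⟩; exact h x
  exact Submodule.finiteDimensional_of_le hle

lemma isFR_zero : IsFinRankOp (0 : L) := by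
  have : ∀ x : H, (0 : L) x ∈ (⊥ : Submodule ℂ H) := by simp
  exact isFR_of_le this

lemma isFR_add {A B : L} (hA : IsFinRankOp A) (hB : IsFinRankOp B) :
    IsFinRankOp (A + B) := by
  have : FiniteDimensional ℂ (LinearMap.range (A : H →ₗ[ℂ] H)) := hA
  have : FiniteDimensional ℂ (LinearMap.range (B : H →ₗ[ℂ] H)) := hB
  refine isFR_of_le (S := LinearMap.range (A : H →ₗ[ℂ] H) ⊔ LinearMap.range (B : H →ₗ[ℂ] H)) ?_
  intro x
  exact add_mem_sup (LinearMap.mem_range_self _ x) (LinearMap.mem_range_self _ x)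

lemma isFR_smul (c : ℂ) {A : L} (hA : IsFinRankOp A) : IsFinRankOp (c • A) := by
  have : FiniteDimensional ℂ (LinearMap.range (A : H →ₗ[ℂ] H)) := hA
  refine isFR_of_le (S := LinearMap.range (A : H →ₗ[ℂ] H)) ?_
  intro x
  exact Submodule.smul_mem _ c (LinearMap.mem_range_self _ x)

lemma isFR_neg {A : L} (hA : IsFinRankOp A) : IsFinRankOp (-A) := by
  have := isFR_smul (-1 : ℂ) hA
  simpa using this

lemma isFR_sub {A B : L} (hA : IsFinRankOp A) (hB : IsFinRankOp B) :
    IsFinRankOp (A - B) := by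
  have := isFR_add hA (isFR_neg hB)
  simpa [sub_eq_add_neg] using this

lemma isFR_mul_left (A : L) {B : L} (hB : IsFinRankOp B) : IsFinRankOp (A * B) := by
  have : FiniteDimensional ℂ (LinearMap.range (B : H →ₗ[ℂ] H)) := hB
  refine isFR_of_le (S := (LinearMap.range (B : H →ₗ[ℂ] H)).map (A : H →ₗ[ℂ] H)) ?_
  intro x
  exact Submodule.mem_map_of_mem (LinearMap.mem_range_self _ x)

lemma isFR_mul_right {A : L} (B : L) (hA : IsFinRankOp A) : IsFinRankOp (A * B) := by
  have : FiniteDimensional ℂ (LinearMap.range (A : H →ₗ[ℂ] H)) := hA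
  refine isFR_of_le (S := LinearMap.range (A : H →ₗ[ℂ] H)) ?_
  intro x
  exact LinearMap.mem_range_self _ (B x)

lemma isFR_sum {ι : Type*} (s : Finset ι) (A : ι → (H →L[ℂ] H)) (h : ∀ i ∈ s, IsFinRankOp (A i)) :
    IsFinRankOp (∑ i ∈ s, A i) := by
  classical
  induction s using Finset.induction_on with
  | empty => simpa using isFR_zero
  | insert a s hni ih =>
      rw [Finset.sum_insert hni]
      exact isFR_add (h a (Finset.mem_insert_self a s))
        (ih fun i hi => h i (Finset.mem_insert_of_mem hi))

lemma isFR_adjoint {A : L} (hA : IsFinRankOp A) : IsFinRankOp (A† A) := by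
  have : FiniteDimensional ℂ (LinearMap.range (A : H →ₗ[ℂ] H)) := hA
  refine isFR_of_le (S := (LinearMap.range (A : H →ₗ[ℂ] H)).map ((A† A : L) : H →ₗ[ℂ] H)) ?_
  intro x
  -- decompose x = v + w with v ∈ range A, w ⊥ range A
  set V : Submodule ℂ H := LinearMap.range (A : H →ₗ[ℂ] H)
  set v : H := (orthogonalProjection V x : H)
  have hv : v ∈ V := SetLike.coe_mem _
  have hw : x - v ∈ Vᗮ := Submodule.sub_starProjection_mem_orthogonal x
  have hker : (A† A) (x - v) = 0 := by
    apply ext_inner_right ℂ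
    intro y
    rw [adjoint_inner_left, inner_zero_left]
    rw [← inner_eq_zero_symm]
    exact hw (A y) (LinearMap.mem_range_self _ y)
  have heq : (A† A) x = (A† A) v := by
    have h2 := map_sub (A† A) x v
    rw [hker] at h2
    have := sub_eq_zero.mp h2.symm
    exact this
  rw [heq]
  exact Submodule.mem_map_of_mem hv


noncomputable def rk1 (u v : H) : L := (innerSL ℂ v).smulRight u

lemma rk1_apply (u v x : H) : rk1 u v x = (inner ℂ v x : ℂ) • u := rfl

lemma isFR_rk1 (u v : H) : IsFinRankOp (rk1 u v) := by
  have : FiniteDimensional ℂ (Submodule.span ℂ {u}) := by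
    infer_instance
  refine isFR_of_le (S := Submodule.span ℂ {u}) ?_
  intro x
  rw [rk1_apply]
  exact Submodule.smul_mem _ _ (Submodule.mem_span_singleton_self u)

lemma rk1_mul_rk1 (u v u' v' : H) :
    rk1 u v * rk1 u' v' = (inner ℂ v u' : ℂ) • rk1 u v' := by
  ext x
  simp [mul_apply, rk1_apply, inner_smul_right, smul_smul, mul_comm]

lemma adjoint_rk1 (u v : H) : A† (rk1 u v) = rk1 v u := by
  symm
  rw [ContinuousLinearMap.eq_adjoint_iff]
  intro x y
  simp [rk1_apply, inner_smul_left, inner_smul_right]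
  ring

lemma rk1_proj {e : H} (he : ‖e‖ = 1) : IsRankOneProj (rk1 e e) := by
  have hee : (inner ℂ e e : ℂ) = 1 := by
    rw [inner_self_eq_norm_sq_to_K, he]; norm_num
  refine ⟨?_, ?_, ?_⟩
  · show rk1 e e * rk1 e e = rk1 e e
    rw [rk1_mul_rk1, hee, one_smul]
  · exact adjoint_rk1 e e
  · have hne : e ≠ 0 := by
      intro h; rw [h, norm_zero] at he; norm_num at he
    have hr : LinearMap.range ((rk1 e e) : H →ₗ[ℂ] H) = Submodule.span ℂ {e} := by
      apply le_antisymm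
      · rintro y ⟨x, rfl⟩
        rw [ContinuousLinearMap.coe_coe, rk1_apply]
        exact Submodule.smul_mem _ _ (Submodule.mem_span_singleton_self e)
      · rw [Submodule.span_singleton_le_iff_mem]
        refine ⟨e, ?_⟩
        rw [ContinuousLinearMap.coe_coe, rk1_apply, hee, one_smul]
    rw [hr]
    exact finrank_span_singleton hne

lemma two_torsion_free {x : L} (h : x + x = 0) : x = 0 := by
  have h2 : (2 : ℂ) • x = 0 := by
    rw [two_smul]; exact h
  rcases smul_eq_zero.mp h2 with h | h
  · norm_num at h
  · exact h

lemma rankOneProj_ne_zero {P : L} (hP : IsRankOneProj P) : P ≠ 0 := by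
  intro h
  have h1 := hP.2.2
  rw [h] at h1
  have h0 : LinearMap.range ((0 : L) : H →ₗ[ℂ] H) = ⊥ := by
    ext x
    simp [LinearMap.mem_range, eq_comm]
  rw [h0, finrank_bot] at h1
  norm_num at h1

/-- B(H) is a prime ring. -/
lemma prime_lemma {u v : L} (h : ∀ z : L, u * z * v = 0) : u = 0 ∨ v = 0 := by
  by_cases hv : v = 0
  · exact Or.inr hv
  left
  obtain ⟨ξ, hξ⟩ : ∃ ξ, v ξ ≠ 0 := by
    by_contra hc
    push_neg at hc
    exact hv (by ext x; simp [hc])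
  ext η
  have h2 := h (rk1 η (v ξ))
  have h3 : (u * rk1 η (v ξ) * v) ξ = (inner ℂ (v ξ) (v ξ) : ℂ) • u η := by
    simp [mul_apply, rk1_apply, map_smul]
  rw [h2] at h3
  have h4 : (inner ℂ (v ξ) (v ξ) : ℂ) ≠ 0 := by
    simpa [inner_self_eq_zero] using hξ
  simp only [ContinuousLinearMap.zero_apply] at h3
  have := (smul_eq_zero.mp h3.symm).resolve_left h4
  simpa using this

/-- orthogonal idempotent self-adjoint elements: pq + qp = 0 → pq = 0. -/
lemma proj_orth {p q : L} (hp : p * p = p) (hq : q * q = q) (h : p * q + q * p = 0) :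
    p * q = 0 ∧ q * p = 0 := by
  have hanti : p * q = -(q * p) := eq_neg_of_add_eq_zero_left h
  have h1 : p * q = q * p := by
    calc p * q = p * (p * q) := by rw [← mul_assoc, hp]
    _ = p * (-(q * p)) := by rw [hanti]
    _ = -((p * q) * p) := by noncomm_ring
    _ = -(-(q * p) * p) := by rw [hanti]
    _ = (q * p) * p := by noncomm_ring
    _ = q * p := by rw [mul_assoc, hp]
  have h2 : p * q = 0 := by
    apply two_torsion_free
    calc p * q + p * q = p * q + q * p := by rw [← h1]
    _ = 0 := h
  exact ⟨h2, by rw [← h1, h2]⟩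


section Jordan

variable {φ : (H →L[ℂ] H) → (H →L[ℂ] H)}
variable (hadd : ∀ A B : H →L[ℂ] H, IsFinRankOp A → IsFinRankOp B → φ (A + B) = φ A + φ B)
variable (hsmul : ∀ (c : ℂ) (A : H →L[ℂ] H), IsFinRankOp A → φ (c • A) = c • φ A)
variable (hsq : ∀ A : H →L[ℂ] H, IsFinRankOp A → φ (A * A) = φ A * φ A)

include hsmul in
lemma phi_zero : φ (0 : H →L[ℂ] H) = 0 := by
  have h := hsmul 0 0 isFR_zero
  simpa using h

include hadd in
lemma phi_sum {ι : Type*} (s : Finset ι) (A : ι → (H →L[ℂ] H)) (h : ∀ i ∈ s, IsFinRankOp (A i)) :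
    φ (∑ i ∈ s, A i) = ∑ i ∈ s, φ (A i) + φ 0 := by
  classical
  induction s using Finset.induction_on with
  | empty => simp
  | insert a s hni ih =>
      rw [Finset.sum_insert hni, Finset.sum_insert hni,
        hadd _ _ (h a (Finset.mem_insert_self a s))
          (isFR_sum s A fun i hi => h i (Finset.mem_insert_of_mem hi)),
        ih (fun i hi => h i (Finset.mem_insert_of_mem hi))]
      abel

include hadd hsmul in
lemma phi_sum' {ι : Type*} (s : Finset ι) (A : ι → (H →L[ℂ] H)) (h : ∀ i ∈ s, IsFinRankOp (A i)) :
    φ (∑ i ∈ s, A i) = ∑ i ∈ s, φ (A i) := by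
  rw [phi_sum hadd s A h, phi_zero hsmul, add_zero]

include hadd hsmul in
lemma phi_neg {z : H →L[ℂ] H} (hz : IsFinRankOp z) : φ (-z) = -φ z := by
  have := hsmul (-1) z hz
  simpa using this

include hadd hsmul in
lemma phi_sub {y z : H →L[ℂ] H} (hy : IsFinRankOp y) (hz : IsFinRankOp z) :
    φ (y - z) = φ y - φ z := by
  rw [sub_eq_add_neg, hadd _ _ hy (isFR_neg hz), phi_neg hadd hsmul hz, ← sub_eq_add_neg]

include hadd hsq in
lemma jmul {a b : H →L[ℂ] H} (ha : IsFinRankOp a) (hb : IsFinRankOp b) :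
    φ (a * b + b * a) = φ a * φ b + φ b * φ a := by
  have key := hsq (a + b) (isFR_add ha hb)
  have e1 : (a + b) * (a + b) = a * a + (a * b + b * a) + b * b := by noncomm_ring
  rw [e1] at key
  rw [hadd _ _ (isFR_add (isFR_mul_right a ha) (isFR_add (isFR_mul_right b ha)
    (isFR_mul_right a hb))) (isFR_mul_right b hb),
    hadd _ _ (isFR_mul_right a ha) (isFR_add (isFR_mul_right b ha) (isFR_mul_right a hb)),
    hsq a ha, hsq b hb, hadd a b ha hb] at key
  have e2 : (φ a + φ b) * (φ a + φ b)
      = φ a * φ a + (φ a * φ b + φ b * φ a) + φ b * φ b := by noncomm_ring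
  rw [e2] at key
  have := add_right_cancel key
  exact add_left_cancel this

include hadd hsmul hsq in
lemma jtriple {a x : H →L[ℂ] H} (ha : IsFinRankOp a) (hx : IsFinRankOp x) :
    φ (a * x * a) = φ a * φ x * φ a := by
  set y : H →L[ℂ] H := a * x + x * a with hy
  have hyf : IsFinRankOp y := isFR_add (isFR_mul_right x ha) (isFR_mul_left x ha)
  have h1 : φ y = φ a * φ x + φ x * φ a := jmul hadd hsq ha hx
  have h2 : φ (a * y + y * a) = φ a * φ y + φ y * φ a := jmul hadd hsq ha hyf
  have e1 : a * y + y * a = (a * a * x + x * (a * a)) + (a * x * a + a * x * a) := by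
    rw [hy]; noncomm_ring
  have haa : IsFinRankOp (a * a) := isFR_mul_right a ha
  have haxa : IsFinRankOp (a * x * a) := isFR_mul_right a (isFR_mul_left a hx)
  have h3 : φ (a * y + y * a)
      = (φ a * φ a) * φ x + φ x * (φ a * φ a) + (φ (a * x * a) + φ (a * x * a)) := by
    rw [e1, hadd _ _ (isFR_add (isFR_mul_left (a*a) hx) (isFR_mul_right (a*a) hx))
        (isFR_add haxa haxa),
      hadd _ _ (isFR_mul_left (a*a) hx) (isFR_mul_right (a*a) hx),
      hadd _ _ haxa haxa]
    have := jmul hadd hsq haa hx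
    have e2 : a * a * x + x * (a * a) = (a*a) * x + x * (a*a) := by noncomm_ring
    rw [← hsq a ha]
    have e3 : φ (a*a) * φ x + φ x * φ (a*a) = φ ((a*a) * x + (x * (a*a))) :=
      (jmul hadd hsq haa hx).symm
    rw [e3]
    rw [hadd _ _ (isFR_mul_left (a*a) hx) (isFR_mul_right (a*a) hx)]
  rw [h3, h1] at h2
  have e4 : φ a * (φ a * φ x + φ x * φ a) + (φ a * φ x + φ x * φ a) * φ a
      = φ a * φ a * φ x + φ x * (φ a * φ a)
        + (φ a * φ x * φ a + φ a * φ x * φ a) := by noncomm_ring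
  rw [e4] at h2
  have h5 := add_left_cancel h2
  have hz : (φ (a * x * a) - φ a * φ x * φ a) + (φ (a * x * a) - φ a * φ x * φ a) = 0 := by
    rw [sub_add_sub_comm, h5, sub_self]
  exact sub_eq_zero.mp (two_torsion_free hz)

include hadd hsmul hsq in
lemma jtriple2 {u v x : H →L[ℂ] H} (hu : IsFinRankOp u) (hv : IsFinRankOp v) (hx : IsFinRankOp x) :
    φ (u * x * v + v * x * u) = φ u * φ x * φ v + φ v * φ x * φ u := by
  have key := jtriple hadd hsmul hsq (isFR_add hu hv) hx
  have e1 : (u + v) * x * (u + v) = u * x * u + (u * x * v + v * x * u) + v * x * v := by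
    noncomm_ring
  rw [e1] at key
  have huxu : IsFinRankOp (u * x * u) := isFR_mul_right u (isFR_mul_left u hx)
  have hvxv : IsFinRankOp (v * x * v) := isFR_mul_right v (isFR_mul_left v hx)
  have huxv : IsFinRankOp (u * x * v) := isFR_mul_right v (isFR_mul_left u hx)
  have hvxu : IsFinRankOp (v * x * u) := isFR_mul_right u (isFR_mul_left v hx)
  rw [hadd _ _ (isFR_add huxu (isFR_add huxv hvxu)) hvxv,
    hadd _ _ huxu (isFR_add huxv hvxu),
    jtriple hadd hsmul hsq hu hx, jtriple hadd hsmul hsq hv hx,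
    hadd u v hu hv] at key
  have e2 : (φ u + φ v) * φ x * (φ u + φ v)
      = φ u * φ x * φ u + (φ u * φ x * φ v + φ v * φ x * φ u) + φ v * φ x * φ v := by
    noncomm_ring
  rw [e2] at key
  have := add_right_cancel key
  exact add_left_cancel this

omit [CompleteSpace H] in
lemma coe_orthproj_perp {V : Submodule ℂ H} [FiniteDimensional ℂ V] (u : H) :
    u - (orthogonalProjection V u : H) ∈ Vᗮ :=
  Submodule.sub_starProjection_mem_orthogonal u

/-- Spectral decomposition of a finite-rank self-adjoint operator. -/
lemma spectral {x : H →L[ℂ] H} (hx : IsFinRankOp x) (hsa : A† x = x) :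
    ∃ (n : ℕ) (e : Fin n → H) (μ : Fin n → ℝ),
      Orthonormal ℂ e ∧ x = ∑ i, (μ i : ℂ) • rk1 (e i) (e i) := by
  haveI : FiniteDimensional ℂ (LinearMap.range (x : H →ₗ[ℂ] H)) := hx
  set V : Submodule ℂ H := LinearMap.range (x : H →ₗ[ℂ] H) with hV
  have hmem : ∀ v : H, x v ∈ V := fun v => LinearMap.mem_range_self _ v
  set T : V →ₗ[ℂ] V :=
    LinearMap.codRestrict V ((x : H →ₗ[ℂ] H).comp V.subtype) (fun v => hmem v) with hT
  have hTapp : ∀ v : V, (T v : H) = x v := fun v => rfl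
  have hinner : ∀ u v : H, (inner ℂ (x u) v : ℂ) = inner ℂ u (x v) := by
    intro u v
    conv_lhs => rw [← hsa]
    exact adjoint_inner_left x v u
  have hsymm : T.IsSymmetric := by
    intro u v
    have h1 : (inner ℂ (x u) (v : H) : ℂ) = inner ℂ (u : H) (x v) := hinner u v
    rw [Submodule.coe_inner, Submodule.coe_inner, hTapp, hTapp]
    exact h1
  set n := finrank ℂ V with hn
  set b := hsymm.eigenvectorBasis rfl with hb
  set μ := hsymm.eigenvalues (n := n) rfl with hμ
  have hON := b.orthonormal
  refine ⟨n, fun i => (b i : H), μ, ?_, ?_⟩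
  · constructor
    · intro i
      rw [Submodule.norm_coe]
      exact hON.1 i
    · intro i j hij
      rw [← Submodule.coe_inner]
      exact hON.2 hij
  · ext u
    have hperp : ∀ w ∈ Vᗮ, x w = 0 := by
      intro w hw
      apply ext_inner_right ℂ
      intro y
      rw [hinner w y, inner_zero_left]
      exact inner_eq_zero_symm.mp (hw (x y) (hmem y))
    set v : V := orthogonalProjection V u with hv
    have hxu : x u = x v := by
      have h1 : x (u - v) = 0 := hperp _ (coe_orthproj_perp u)
      rw [map_sub] at h1
      exact (sub_eq_zero.mp h1)
    have hcoord : ∀ i : Fin n, (inner ℂ ((b i : H)) (v : H) : ℂ) = inner ℂ ((b i : H)) u := by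
      intro i
      have hw : u - (v : H) ∈ Vᗮ := coe_orthproj_perp u
      have h1 : (inner ℂ ((b i : H)) (u - (v : H)) : ℂ) = 0 := hw ((b i : H)) (b i).2
      rw [inner_sub_right] at h1
      have := sub_eq_zero.mp h1
      exact this.symm
    have hxbi : ∀ i, x (b i : H) = (μ i : ℂ) • (b i : H) := by
      intro i
      have h1 := hsymm.apply_eigenvectorBasis (n := n) rfl i
      rw [← hb, ← hμ] at h1
      calc x (b i : H) = (T (b i) : H) := (hTapp _).symm
      _ = (((μ i : ℂ) • b i : V) : H) := congrArg _ h1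
      _ = (μ i : ℂ) • (b i : H) := rfl
    have hrepr : (v : H) = ∑ i, b.repr v i • (b i : H) := by
      conv_lhs => rw [← b.sum_repr v]
      simp
    show x u = (∑ i, (μ i : ℂ) • rk1 ((b i : H)) ((b i : H))) u
    rw [ContinuousLinearMap.sum_apply]
    calc x u = x (v : H) := hxu
    _ = ∑ i, b.repr v i • ((μ i : ℂ) • (b i : H)) := by
        conv_lhs => rw [hrepr]
        rw [map_sum]
        refine Finset.sum_congr rfl fun i _ => ?_
        rw [map_smul, hxbi i]
    _ = ∑ i, ((μ i : ℂ) • rk1 ((b i : H)) ((b i : H))) u := by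
        refine Finset.sum_congr rfl fun i _ => ?_
        rw [ContinuousLinearMap.smul_apply, rk1_apply,
          b.repr_apply_apply, Submodule.coe_inner, hcoord i, smul_smul, smul_smul, mul_comm]

/-- The corner subspace `{y | g y g = y}`. -/
def cornerS (g : H →L[ℂ] H) : Submodule ℂ (H →L[ℂ] H) where
  carrier := {y | g * y * g = y}
  zero_mem' := by simp
  add_mem' := by
    intro y z hy hz
    simp only [Set.mem_setOf_eq] at *
    rw [mul_add, add_mul, hy, hz]
  smul_mem' := by
    intro c y hy
    simp only [Set.mem_setOf_eq] at *
    rw [mul_smul_comm, smul_mul_assoc, hy]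

lemma cornerS_fin {g y : H →L[ℂ] H} (hg : IsFinRankOp g) (hy : y ∈ cornerS g) :
    IsFinRankOp y := by
  have : g * y * g = y := hy
  rw [← this, mul_assoc]
  exact isFR_mul_right _ hg

/-- compression of a corner element to the range of `g`, as a linear map. -/
lemma corner_findim {g : H →L[ℂ] H} (hg : IsFinRankOp g) :
    ∃ J : cornerS g →ₗ[ℂ] ((LinearMap.range (g : H →ₗ[ℂ] H)) →ₗ[ℂ] (LinearMap.range (g : H →ₗ[ℂ] H))),
      Function.Injective J := by
  haveI : FiniteDimensional ℂ (LinearMap.range (g : H →ₗ[ℂ] H)) := hg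
  have hmem : ∀ (y : cornerS g) (v : LinearMap.range (g : H →ₗ[ℂ] H)), (y : H →L[ℂ] H) (v : H) ∈
      LinearMap.range (g : H →ₗ[ℂ] H) := by
    intro y v
    have hy : g * (y : H →L[ℂ] H) * g = y := y.2
    have h1 := congrArg (fun T : H →L[ℂ] H => T (v : H)) hy
    rw [← h1]
    have h2 : (g * (y : H →L[ℂ] H) * g) (v : H)
        = g ((((y : H →L[ℂ] H)) * g) (v : H)) := rfl
    rw [h2]
    exact LinearMap.mem_range_self _ _
  set Jf : cornerS g → ((LinearMap.range (g : H →ₗ[ℂ] H)) →ₗ[ℂ] (LinearMap.range (g : H →ₗ[ℂ] H))) := fun y =>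
    LinearMap.codRestrict (LinearMap.range (g : H →ₗ[ℂ] H))
      (((y : H →L[ℂ] H) : H →ₗ[ℂ] H).comp (LinearMap.range (g : H →ₗ[ℂ] H)).subtype)
      (fun v => hmem y v) with hJf
  have hJadd : ∀ y z, Jf (y + z) = Jf y + Jf z := by
    intro y z; ext v; simp [hJf]; rfl
  have hJsmul : ∀ (c : ℂ) y, Jf (c • y) = c • Jf y := by
    intro c y; ext v; simp [hJf]; rfl
  refine ⟨⟨⟨Jf, fun x y => hJadd x y⟩, fun c y => hJsmul c y⟩, ?_⟩
  intro y z hyz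
  apply Subtype.ext
  ext u
  have hy : g * (y : H →L[ℂ] H) * g = y := y.2
  have hz : g * (z : H →L[ℂ] H) * g = z := z.2
  have happ : ∀ w : cornerS g, (w : H →L[ℂ] H) u
      = g ((w : H →L[ℂ] H) (g u)) := by
    intro w
    have hw : g * (w : H →L[ℂ] H) * g = w := w.2
    conv_lhs => rw [← hw]
    rfl
  rw [happ y, happ z]
  have h6 := congrArg (fun (J : (LinearMap.range (g : H →ₗ[ℂ] H)) →ₗ[ℂ] (LinearMap.range (g : H →ₗ[ℂ] H))) =>
    (J ⟨g u, LinearMap.mem_range_self _ u⟩ : H)) hyz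
  have h7 : (y : H →L[ℂ] H) (g u) = (z : H →L[ℂ] H) (g u) := by
    exact h6
  rw [h7]

lemma proj_basis (V : Submodule ℂ H) [FiniteDimensional ℂ V] :
    ∃ (n : ℕ) (e : Fin n → H), n = finrank ℂ V ∧ Orthonormal ℂ e ∧
      (∀ v ∈ V, (∑ i, rk1 (e i) (e i)) v = v) ∧
      (∀ u : H, u - (∑ i, rk1 (e i) (e i)) u ∈ Vᗮ) := by
  set n := finrank ℂ V with hn
  set c := stdOrthonormalBasis ℂ V with hc
  set e : Fin n → H := fun i => (c i : H) with he
  have hON : Orthonormal ℂ e := by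
    constructor
    · intro i
      rw [he]
      simp only
      rw [Submodule.norm_coe]
      exact c.orthonormal.1 i
    · intro i j hij
      rw [he]
      simp only
      rw [← Submodule.coe_inner]
      exact c.orthonormal.2 hij
  set E : H →L[ℂ] H := ∑ i, rk1 (e i) (e i) with hE
  have hEapp : ∀ u : H, E u = ∑ i, (inner ℂ (e i) u : ℂ) • e i := by
    intro u
    rw [hE, ContinuousLinearMap.sum_apply]
    exact Finset.sum_congr rfl fun i _ => rfl
  have hid : ∀ v ∈ V, E v = v := by
    intro v hv
    have h1 := c.sum_repr ⟨v, hv⟩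
    rw [hEapp]
    have h3 : ∀ i : Fin n, (inner ℂ (e i) v : ℂ) • e i = ((c.repr ⟨v, hv⟩ i • c i : V) : H) := by
      intro i
      rw [Submodule.coe_smul, c.repr_apply_apply, Submodule.coe_inner]
    rw [Finset.sum_congr rfl fun i _ => h3 i, ← Submodule.coe_sum, h1]
  have hsaE : A† E = E := by
    rw [hE, map_sum]
    exact Finset.sum_congr rfl fun i _ => adjoint_rk1 _ _
  refine ⟨n, e, rfl, hON, hid, ?_⟩
  intro u
  intro z hz
  rw [inner_sub_right]
  have h3 : (inner ℂ z (E u) : ℂ) = inner ℂ (E z) u := by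
    have h4 := adjoint_inner_left E u z
    rw [hsaE] at h4
    exact h4.symm
  rw [h3, hid z hz, sub_self]

include hadd hsmul hsq in
lemma sandwich {a b x : H →L[ℂ] H} (ha : IsFinRankOp a) (hb : IsFinRankOp b)
    (hx : IsFinRankOp x) :
    (φ (a * b) - φ a * φ b) * φ x * (φ (a * b) - φ b * φ a)
      + (φ (a * b) - φ b * φ a) * φ x * (φ (a * b) - φ a * φ b) = 0 := by
  have hab : IsFinRankOp (a * b) := isFR_mul_left a hb
  have hba : IsFinRankOp (b * a) := isFR_mul_left b ha
  have hbxb : IsFinRankOp (b * x * b) := isFR_mul_right b (isFR_mul_left b hx)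
  have haxa : IsFinRankOp (a * x * a) := isFR_mul_right a (isFR_mul_left a hx)
  -- s + s' = p + q
  have h0 : φ (a * b + b * a) = φ a * φ b + φ b * φ a := jmul hadd hsq ha hb
  rw [hadd _ _ hab hba] at h0
  have hS : φ (b * a) = φ a * φ b + φ b * φ a - φ (a * b) := by
    rw [← h0]; abel
  -- polarized triple identity with u = a*b, v = b*a
  have key := jtriple2 hadd hsmul hsq hab hba hx
  -- rewrite LHS of key
  have e1 : a * b * x * (b * a) + b * a * x * (a * b)
      = a * (b * x * b) * a + b * (a * x * a) * b := by noncomm_ring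
  rw [e1] at key
  rw [hadd _ _ (isFR_mul_right a (isFR_mul_left a hbxb))
      (isFR_mul_right b (isFR_mul_left b haxa)),
    jtriple hadd hsmul hsq ha hbxb, jtriple hadd hsmul hsq hb haxa,
    jtriple hadd hsmul hsq hb hx, jtriple hadd hsmul hsq ha hx, hS] at key
  have e2 : (φ (a * b) - φ a * φ b) * φ x * (φ (a * b) - φ b * φ a)
      + (φ (a * b) - φ b * φ a) * φ x * (φ (a * b) - φ a * φ b)
      = (φ a * (φ b * φ x * φ b) * φ a + φ b * (φ a * φ x * φ a) * φ b)
        - (φ (a * b) * φ x * (φ a * φ b + φ b * φ a - φ (a * b))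
          + (φ a * φ b + φ b * φ a - φ (a * b)) * φ x * φ (a * b)) := by
    noncomm_ring
  rw [e2, key, sub_self]

variable (hstar : ∀ A : H →L[ℂ] H, IsFinRankOp A → φ (A† A) = A† (φ A))
variable (hproj : ∀ P : H →L[ℂ] H, IsFinRankOp P → IsRankOneProj P → IsRankOneProj (φ P))

include hadd hsmul hsq hproj in
lemma phi_inj_sa {x : H →L[ℂ] H} (hx : IsFinRankOp x) (hsa : A† x = x)
    (h0 : φ x = 0) : x = 0 := by
  obtain ⟨n, e, μ, hON, hdec⟩ := spectral hx hsa
  set P : Fin n → (H →L[ℂ] H) := fun i => rk1 (e i) (e i) with hP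
  set q : Fin n → (H →L[ℂ] H) := fun i => φ (P i) with hq
  have hqproj : ∀ i, IsRankOneProj (q i) := fun i =>
    hproj _ (isFR_rk1 _ _) (rk1_proj (hON.1 i))
  have hqq : ∀ i, q i * q i = q i := fun i => (hqproj i).1
  have horth : ∀ i j, i ≠ j → q i * q j = 0 := by
    intro i j hij
    have hPQ : P i * P j = 0 := by
      rw [hP]
      simp only
      rw [rk1_mul_rk1, hON.2 hij, zero_smul]
    have hQP : P j * P i = 0 := by
      rw [hP]
      simp only
      rw [rk1_mul_rk1, hON.2 (Ne.symm hij), zero_smul]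
    have hj := jmul hadd hsq (isFR_rk1 (e i) (e i)) (isFR_rk1 (e j) (e j))
    rw [show rk1 (e i) (e i) * rk1 (e j) (e j) = P i * P j from rfl] at hj
    rw [show rk1 (e j) (e j) * rk1 (e i) (e i) = P j * P i from rfl] at hj
    rw [hPQ, hQP, add_zero, phi_zero hsmul] at hj
    exact (proj_orth (hqq i) (hqq j) hj.symm).1
  have hphix : φ x = ∑ i, (μ i : ℂ) • q i := by
    rw [hdec, phi_sum' hadd hsmul _ _ (fun i _ => isFR_smul _ (isFR_rk1 _ _))]
    exact Finset.sum_congr rfl fun i _ => hsmul _ _ (isFR_rk1 _ _)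
  have hcoef : ∀ k, (μ k : ℂ) = 0 := by
    intro k
    have h1 : q k * (φ x) * q k = (μ k : ℂ) • q k := by
      rw [hphix, Finset.mul_sum, Finset.sum_mul]
      rw [Finset.sum_eq_single k]
      · rw [mul_smul_comm, smul_mul_assoc, hqq k, hqq k]
      · intro i _ hik
        rw [mul_smul_comm, smul_mul_assoc, horth k i (Ne.symm hik), zero_mul, smul_zero]
      · intro h; exact absurd (Finset.mem_univ k) h
    rw [h0, mul_zero, zero_mul] at h1
    rcases smul_eq_zero.mp h1.symm with h | h
    · exact h
    · exact absurd h (rankOneProj_ne_zero (hqproj k))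
  rw [hdec]
  refine Finset.sum_eq_zero fun i _ => ?_
  rw [hcoef i, zero_smul]

include hadd hsmul hsq hstar hproj in
lemma phi_inj {x : H →L[ℂ] H} (hx : IsFinRankOp x) (h0 : φ x = 0) : x = 0 := by
  have hxa : IsFinRankOp (A† x) := isFR_adjoint hx
  have h1 : φ (x + A† x) = 0 := by
    rw [hadd _ _ hx hxa, h0, hstar x hx, h0, map_zero, add_zero]
  have h2 : x + A† x = 0 := by
    apply phi_inj_sa hadd hsmul hsq hproj (isFR_add hx hxa) _ h1
    rw [map_add, adjoint_adjoint]
    abel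
  have hneg : φ (-(A† x)) = -φ (A† x) := by
    have := hsmul (-1) (A† x) hxa
    simpa using this
  have hsub : φ (x - A† x) = 0 := by
    rw [sub_eq_add_neg, hadd _ _ hx (isFR_neg hxa), hneg, hstar x hx, h0, map_zero,
      neg_zero, add_zero]
  have h3 : φ (Complex.I • (x - A† x)) = 0 := by
    rw [hsmul _ _ (isFR_sub hx hxa), hsub, smul_zero]
  have h4 : Complex.I • (x - A† x) = 0 := by
    apply phi_inj_sa hadd hsmul hsq hproj (isFR_smul _ (isFR_sub hx hxa)) _ h3
    rw [LinearIsometryEquiv.map_smulₛₗ]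
    simp only [map_sub, adjoint_adjoint]
    rw [show ((starRingEnd ℂ) Complex.I : ℂ) = -Complex.I by simp]
    rw [smul_sub, smul_sub, neg_smul, neg_smul]
    abel
  have h5 : x - A† x = 0 := by
    rcases smul_eq_zero.mp h4 with h | h
    · exact absurd h Complex.I_ne_zero
    · exact h
  apply two_torsion_free
  calc x + x = (x + A† x) + (x - A† x) := by abel
  _ = 0 := by rw [h2, h5, add_zero]

lemma corner_abs {g y : H →L[ℂ] H} (hgg : g * g = g) (h : y = g * y * g) :
    g * y = y ∧ y * g = y := by
  constructor
  · conv_lhs => rw [h]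
    have h1 : g * (g * y * g) = g * g * y * g := by noncomm_ring
    rw [h1, hgg, ← h]
  · conv_lhs => rw [h]
    have h1 : g * y * g * g = g * y * (g * g) := by noncomm_ring
    rw [h1, hgg, ← h]

include hadd hsmul hsq hstar hproj in
lemma pair_dichotomy {a b : H →L[ℂ] H} (ha : IsFinRankOp a) (hb : IsFinRankOp b) :
    φ (a * b) = φ a * φ b ∨ φ (a * b) = φ b * φ a := by
  classical
  haveI : FiniteDimensional ℂ (LinearMap.range (a : H →ₗ[ℂ] H)) := ha
  haveI : FiniteDimensional ℂ (LinearMap.range (b : H →ₗ[ℂ] H)) := hb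
  haveI : FiniteDimensional ℂ (LinearMap.range ((A† a) : H →ₗ[ℂ] H)) := isFR_adjoint ha
  haveI : FiniteDimensional ℂ (LinearMap.range ((A† b) : H →ₗ[ℂ] H)) := isFR_adjoint hb
  set V : Submodule ℂ H := (LinearMap.range (a : H →ₗ[ℂ] H) ⊔ LinearMap.range ((A† a) : H →ₗ[ℂ] H))
    ⊔ (LinearMap.range (b : H →ₗ[ℂ] H) ⊔ LinearMap.range ((A† b) : H →ₗ[ℂ] H)) with hV
  haveI : FiniteDimensional ℂ V := by
    rw [hV]; infer_instance
  obtain ⟨n, e, hn, hON, hid, hperp⟩ := proj_basis V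
  set E : H →L[ℂ] H := ∑ i, rk1 (e i) (e i) with hE
  have hEfin : IsFinRankOp E := isFR_sum _ _ (fun i _ => isFR_rk1 _ _)
  have hab : IsFinRankOp (a * b) := isFR_mul_left a hb
  -- E acts as identity on V, and kills V-perp after any of a, b
  have hkill : ∀ (c : H →L[ℂ] H), LinearMap.range ((A† c) : H →ₗ[ℂ] H) ≤ V →
      ∀ w ∈ Vᗮ, c w = 0 := by
    intro c hc w hw
    apply ext_inner_right ℂ
    intro y
    rw [inner_zero_left]
    have h3 : (inner ℂ (c w) y : ℂ) = inner ℂ w ((A† c) y) := (adjoint_inner_right c w y).symm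
    rw [h3]
    exact inner_eq_zero_symm.mp (hw _ (hc (LinearMap.mem_range_self _ y)))
  have hIdL : ∀ (c : H →L[ℂ] H), LinearMap.range (c : H →ₗ[ℂ] H) ≤ V → E * c = c := by
    intro c hc
    ext u
    exact hid (c u) (hc (LinearMap.mem_range_self _ u))
  have hIdR : ∀ (c : H →L[ℂ] H), LinearMap.range ((A† c) : H →ₗ[ℂ] H) ≤ V → c * E = c := by
    intro c hc
    ext u
    show c (E u) = c u
    have h1 : E u - u ∈ Vᗮ := by
      have h2 := hperp u
      have h3 : E u - u = -(u - E u) := by abel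
      rw [h3]
      exact neg_mem h2
    have h4 : c (E u) - c u = 0 := by
      rw [← map_sub]
      exact hkill c hc _ h1
    exact sub_eq_zero.mp h4
  have hra : LinearMap.range (a : H →ₗ[ℂ] H) ≤ V := le_sup_of_le_left le_sup_left
  have hraa : LinearMap.range ((A† a) : H →ₗ[ℂ] H) ≤ V := le_sup_of_le_left le_sup_right
  have hrb : LinearMap.range (b : H →ₗ[ℂ] H) ≤ V := le_sup_of_le_right le_sup_left
  have hrbb : LinearMap.range ((A† b) : H →ₗ[ℂ] H) ≤ V := le_sup_of_le_right le_sup_right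
  have hEa : E * a = a := hIdL a hra
  have haE : a * E = a := hIdR a hraa
  have hEb : E * b = b := hIdL b hrb
  have hbE : b * E = b := hIdR b hrbb
  -- the projections P i and their images q i
  set P : Fin n → (H →L[ℂ] H) := fun i => rk1 (e i) (e i) with hP
  set q : Fin n → (H →L[ℂ] H) := fun i => φ (P i) with hq
  have hqproj : ∀ i, IsRankOneProj (q i) := fun i =>
    hproj _ (isFR_rk1 _ _) (rk1_proj (hON.1 i))
  have hqq : ∀ i, q i * q i = q i := fun i => (hqproj i).1
  have horth : ∀ i j, i ≠ j → q i * q j = 0 := by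
    intro i j hij
    have hPQ : P i * P j = 0 := by
      rw [hP]; simp only
      rw [rk1_mul_rk1, hON.2 hij, zero_smul]
    have hQP : P j * P i = 0 := by
      rw [hP]; simp only
      rw [rk1_mul_rk1, hON.2 (Ne.symm hij), zero_smul]
    have hj := jmul hadd hsq (isFR_rk1 (e i) (e i)) (isFR_rk1 (e j) (e j))
    rw [show rk1 (e i) (e i) * rk1 (e j) (e j) = P i * P j from rfl] at hj
    rw [show rk1 (e j) (e j) * rk1 (e i) (e i) = P j * P i from rfl] at hj
    rw [hPQ, hQP, add_zero, phi_zero hsmul] at hj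
    exact (proj_orth (hqq i) (hqq j) hj.symm).1
  set f : H →L[ℂ] H := ∑ i, q i with hf
  have hffin : IsFinRankOp f := by
    refine isFR_sum _ _ (fun i _ => ?_)
    have h1 : 0 < finrank ℂ (LinearMap.range ((q i) : H →ₗ[ℂ] H)) := by rw [(hqproj i).2.2]; norm_num
    exact Module.finite_of_finrank_pos h1
  have hφE : φ E = f := by
    rw [hE, hf, phi_sum' hadd hsmul _ _ (fun i _ => isFR_rk1 _ _)]
  have hff : f * f = f := by
    rw [hf, Finset.sum_mul_sum]
    refine Finset.sum_congr rfl fun i _ => ?_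
    rw [Finset.sum_eq_single i]
    · exact hqq i
    · intro j _ hji
      exact horth i j (Ne.symm hji)
    · intro hni
      exact absurd (Finset.mem_univ i) hni
  -- φ maps the E-corner into the f-corner
  have hcornphi : ∀ y : H →L[ℂ] H, IsFinRankOp y → E * y * E = y → φ y = f * φ y * f := by
    intro y hy hEy
    conv_lhs => rw [← hEy]
    rw [jtriple hadd hsmul hsq hEfin hy, hφE]
  have hEaE : E * a * E = a := by rw [hEa, haE]
  have hEbE : E * b * E = b := by rw [hEb, hbE]
  have hEabE : E * (a * b) * E = a * b := by
    have h1 : E * (a * b) * E = (E * a) * (b * E) := by noncomm_ring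
    rw [h1, hEa, hbE]
  have hfa : φ a = f * φ a * f := hcornphi a ha hEaE
  have hfb : φ b = f * φ b * f := hcornphi b hb hEbE
  have hfab : φ (a * b) = f * φ (a * b) * f := hcornphi (a * b) hab hEabE
  -- Γ and Δ
  set Γ : H →L[ℂ] H := φ (a * b) - φ a * φ b with hΓ
  set Δ : H →L[ℂ] H := φ (a * b) - φ b * φ a with hΔ
  have hfΓ : f * Γ = Γ ∧ Γ * f = Γ := by
    have hmul : φ a * φ b = f * (φ a * φ b) * f := by
      have h1 : f * (φ a * φ b) * f = f * φ a * (φ b * f) := by noncomm_ring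
      rw [h1, (corner_abs hff hfa).1, (corner_abs hff hfb).2]
    constructor
    · rw [hΓ, mul_sub, (corner_abs hff hfab).1, (corner_abs hff hmul).1]
    · rw [hΓ, sub_mul, (corner_abs hff hfab).2, (corner_abs hff hmul).2]
  have hfΔ : f * Δ = Δ ∧ Δ * f = Δ := by
    have hmul : φ b * φ a = f * (φ b * φ a) * f := by
      have h1 : f * (φ b * φ a) * f = f * φ b * (φ a * f) := by noncomm_ring
      rw [h1, (corner_abs hff hfb).1, (corner_abs hff hfa).2]
    constructor
    · rw [hΔ, mul_sub, (corner_abs hff hfab).1, (corner_abs hff hmul).1]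
    · rw [hΔ, sub_mul, (corner_abs hff hfab).2, (corner_abs hff hmul).2]
  -- the linear map Φ from the E-corner to the f-corner
  have hmemf : ∀ y : H →L[ℂ] H, y ∈ cornerS E → φ y ∈ cornerS f := by
    intro y hy
    have hyfin : IsFinRankOp y := cornerS_fin hEfin hy
    show f * φ y * f = φ y
    exact (hcornphi y hyfin hy).symm
  set Φfun : cornerS E → cornerS f := fun y => ⟨φ (y : H →L[ℂ] H), hmemf _ y.2⟩ with hΦfun
  have hΦadd : ∀ y z, Φfun (y + z) = Φfun y + Φfun z := by
    intro y z
    apply Subtype.ext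
    show φ ((y + z : cornerS E) : H →L[ℂ] H) = ((Φfun y + Φfun z : cornerS f) : H →L[ℂ] H)
    have h1 : ((y + z : cornerS E) : H →L[ℂ] H) = (y : H →L[ℂ] H) + (z : H →L[ℂ] H) := rfl
    rw [h1, hadd _ _ (cornerS_fin hEfin y.2) (cornerS_fin hEfin z.2)]
    rfl
  have hΦsmul : ∀ (c : ℂ) y, Φfun (c • y) = c • Φfun y := by
    intro c y
    apply Subtype.ext
    show φ ((c • y : cornerS E) : H →L[ℂ] H) = ((c • Φfun y : cornerS f) : H →L[ℂ] H)
    have h1 : ((c • y : cornerS E) : H →L[ℂ] H) = c • (y : H →L[ℂ] H) := rfl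
    rw [h1, hsmul _ _ (cornerS_fin hEfin y.2)]
    rfl
  set Φ : cornerS E →ₗ[ℂ] cornerS f :=
    ⟨⟨Φfun, fun y z => hΦadd y z⟩, fun c y => hΦsmul c y⟩ with hΦ
  have hΦinj : Function.Injective Φ := by
    intro y z hyz
    have h1 : φ (y : H →L[ℂ] H) = φ (z : H →L[ℂ] H) := congrArg Subtype.val hyz
    have h2 : φ ((y : H →L[ℂ] H) - (z : H →L[ℂ] H)) = 0 := by
      rw [phi_sub hadd hsmul (cornerS_fin hEfin y.2) (cornerS_fin hEfin z.2), h1, sub_self]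
    have h3 := phi_inj hadd hsmul hsq hstar hproj
      (isFR_sub (cornerS_fin hEfin y.2) (cornerS_fin hEfin z.2)) h2
    exact Subtype.ext (sub_eq_zero.mp h3)
  -- finite dimensionality of the corners
  haveI : FiniteDimensional ℂ (LinearMap.range (E : H →ₗ[ℂ] H)) := hEfin
  haveI : FiniteDimensional ℂ (LinearMap.range (f : H →ₗ[ℂ] H)) := hffin
  obtain ⟨JE, hJE⟩ := corner_findim (g := E) hEfin
  obtain ⟨Jf, hJf2⟩ := corner_findim (g := f) hffin
  haveI : FiniteDimensional ℂ (cornerS E) := FiniteDimensional.of_injective JE hJE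
  haveI : FiniteDimensional ℂ (cornerS f) := FiniteDimensional.of_injective Jf hJf2
  -- rank of f is at most n
  have hrgf : finrank ℂ (LinearMap.range (f : H →ₗ[ℂ] H)) ≤ n := by
    have hw : ∀ i : Fin n, ∃ w : H, w ≠ 0 ∧
        LinearMap.range ((q i) : H →ₗ[ℂ] H) = Submodule.span ℂ {w} := by
      intro i
      have h1 : q i ≠ 0 := rankOneProj_ne_zero (hqproj i)
      obtain ⟨u0, hu0⟩ : ∃ u0, q i u0 ≠ 0 := by
        by_contra hc
        push_neg at hc
        exact h1 (by ext u; simp [hc])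
      haveI : FiniteDimensional ℂ (LinearMap.range ((q i) : H →ₗ[ℂ] H)) := by
        have h2 : 0 < finrank ℂ (LinearMap.range ((q i) : H →ₗ[ℂ] H)) := by
          rw [(hqproj i).2.2]; norm_num
        exact Module.finite_of_finrank_pos h2
      refine ⟨q i u0, hu0, ?_⟩
      have h3 : Submodule.span ℂ {q i u0} ≤ LinearMap.range ((q i) : H →ₗ[ℂ] H) := by
        rw [Submodule.span_singleton_le_iff_mem]
        exact LinearMap.mem_range_self _ u0
      exact (Submodule.eq_of_le_of_finrank_eq h3
        (by rw [finrank_span_singleton hu0, (hqproj i).2.2])).symm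
    choose w hw0 hwr using hw
    haveI : FiniteDimensional ℂ (Submodule.span ℂ (Set.range w)) :=
      FiniteDimensional.span_of_finite ℂ (Set.finite_range w)
    have hle : LinearMap.range (f : H →ₗ[ℂ] H) ≤ Submodule.span ℂ (Set.range w) := by
      rintro y ⟨u, rfl⟩
      have h4 : f u = ∑ i, q i u := by
        rw [hf]; exact ContinuousLinearMap.sum_apply _ _ u
      rw [ContinuousLinearMap.coe_coe, h4]
      refine Submodule.sum_mem _ (fun i _ => ?_)
      have h5 : q i u ∈ Submodule.span ℂ {w i} := by
        rw [← hwr i]; exact LinearMap.mem_range_self _ u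
      exact Submodule.span_mono (Set.singleton_subset_iff.mpr (Set.mem_range_self i)) h5
    calc finrank ℂ (LinearMap.range (f : H →ₗ[ℂ] H))
        ≤ finrank ℂ (Submodule.span ℂ (Set.range w)) := Submodule.finrank_mono hle
    _ ≤ (Set.range w).toFinset.card := by
        classical
        exact finrank_span_le_card (Set.range w)
    _ ≤ n := by
        classical
        rw [Set.toFinset_range]
        exact (Finset.card_image_le).trans (by simp)
  -- the corner of f has dimension at most n²
  have hd1 : finrank ℂ (cornerS f) ≤ n * n := by
    have h1 := LinearMap.finrank_le_finrank_of_injective hJf2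
    rw [Module.finrank_linearMap] at h1
    exact h1.trans (Nat.mul_le_mul hrgf hrgf)
  -- the corner of E has dimension at least n²
  have hd2 : n * n ≤ finrank ℂ (cornerS E) := by
    set π : H →L[ℂ] V := orthogonalProjection V with hπ
    set ι : V →L[ℂ] H := V.subtypeL with hι
    have hπE : ∀ u, π (E u) = π u := by
      intro u
      have h1 : E u - u ∈ Vᗮ := by
        have h2 := hperp u
        have h3 : E u - u = -(u - E u) := by abel
        rw [h3]
        exact neg_mem h2
      have h4 : π (E u) - π u = π (E u - u) := by rw [map_sub]
      have h5 : π (E u - u) = 0 :=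
        Submodule.orthogonalProjectionOnto_apply_of_mem_orthogonal h1
      exact sub_eq_zero.mp (h4.trans h5)
    have hJ2mem : ∀ g : V →ₗ[ℂ] V,
        (ι ∘L (LinearMap.toContinuousLinearMap g) ∘L π) ∈ cornerS E := by
      intro g
      show E * (ι ∘L (LinearMap.toContinuousLinearMap g) ∘L π) * E
        = ι ∘L (LinearMap.toContinuousLinearMap g) ∘L π
      ext u
      show E (ι (LinearMap.toContinuousLinearMap g (π (E u)))) = ι (LinearMap.toContinuousLinearMap g (π u))
      rw [hπE u]
      exact hid _ (Submodule.coe_mem (LinearMap.toContinuousLinearMap g (π u)))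
    set J2fun : (V →ₗ[ℂ] V) → cornerS E :=
      fun g => ⟨ι ∘L (LinearMap.toContinuousLinearMap g) ∘L π, hJ2mem g⟩ with hJ2fun
    have hJ2add : ∀ g g', J2fun (g + g') = J2fun g + J2fun g' := by
      intro g g'
      apply Subtype.ext
      apply ContinuousLinearMap.ext
      intro u
      show ι (LinearMap.toContinuousLinearMap (g + g') (π u))
        = ι (LinearMap.toContinuousLinearMap g (π u)) + ι (LinearMap.toContinuousLinearMap g' (π u))
      rw [map_add, ContinuousLinearMap.add_apply, map_add]
    have hJ2smul : ∀ (c : ℂ) g, J2fun (c • g) = c • J2fun g := by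
      intro c g
      apply Subtype.ext
      apply ContinuousLinearMap.ext
      intro u
      show ι (LinearMap.toContinuousLinearMap (c • g) (π u))
        = c • ι (LinearMap.toContinuousLinearMap g (π u))
      rw [map_smul, ContinuousLinearMap.smul_apply, map_smul]
    set J2 : (V →ₗ[ℂ] V) →ₗ[ℂ] cornerS E :=
      ⟨⟨J2fun, fun g g' => hJ2add g g'⟩, fun c g => hJ2smul c g⟩ with hJ2
    have hJ2inj : Function.Injective J2 := by
      intro g g' hgg
      have h1 : (J2 g : H →L[ℂ] H) = (J2 g' : H →L[ℂ] H) := congrArg Subtype.val hgg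
      ext v
      have h2 : (J2 g : H →L[ℂ] H) (v : H) = (J2 g' : H →L[ℂ] H) (v : H) := by rw [h1]
      have h3 : ∀ g'' : V →ₗ[ℂ] V, (J2 g'' : H →L[ℂ] H) (v : H)
          = ((g'' v : V) : H) := by
        intro g''
        show ι (LinearMap.toContinuousLinearMap g'' (π (v : H))) = _
        rw [hπ]
        rw [orthogonalProjection_mem_subspace_eq_self]
        rfl
      rw [h3 g, h3 g'] at h2
      exact h2
    have h4 := LinearMap.finrank_le_finrank_of_injective hJ2inj
    rw [Module.finrank_linearMap, ← hn] at h4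
    exact h4
  -- surjectivity of Φ
  have hsurjΦ : Function.Surjective Φ := by
    have h1 : finrank ℂ (LinearMap.range Φ) = finrank ℂ (cornerS E) :=
      LinearMap.finrank_range_of_inj hΦinj
    have h2 : finrank ℂ (cornerS f) ≤ finrank ℂ (LinearMap.range Φ) := by
      rw [h1]
      exact hd1.trans hd2
    have h3 : LinearMap.range Φ = ⊤ :=
      Submodule.eq_top_of_finrank_eq (le_antisymm (Submodule.finrank_le _) h2)
    exact LinearMap.range_eq_top.mp h3
  -- the sandwich identity for arbitrary z
  have I' : ∀ z : H →L[ℂ] H, Γ * z * Δ = -(Δ * z * Γ) := by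
    intro z
    have hzf : f * z * f ∈ cornerS f := by
      show f * (f * z * f) * f = f * z * f
      have h1 : f * (f * z * f) * f = (f * f) * z * (f * f) := by noncomm_ring
      rw [h1, hff]
    obtain ⟨y, hy⟩ := hsurjΦ ⟨f * z * f, hzf⟩
    have hyval : φ (y : H →L[ℂ] H) = f * z * f := congrArg Subtype.val hy
    have hyfin : IsFinRankOp (y : H →L[ℂ] H) := cornerS_fin hEfin y.2
    have hs := sandwich hadd hsmul hsq (a := a) (b := b) (x := (y : H →L[ℂ] H)) ha hb hyfin
    rw [← hΓ, ← hΔ, hyval] at hs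
    have h4 : Γ * (f * z * f) * Δ = Γ * z * Δ := by
      have h5 : Γ * (f * z * f) * Δ = (Γ * f) * z * (f * Δ) := by noncomm_ring
      rw [h5, hfΓ.2, hfΔ.1]
    have h6 : Δ * (f * z * f) * Γ = Δ * z * Γ := by
      have h7 : Δ * (f * z * f) * Γ = (Δ * f) * z * (f * Γ) := by noncomm_ring
      rw [h7, hfΔ.2, hfΓ.1]
    rw [h4, h6] at hs
    exact eq_neg_of_add_eq_zero_left hs
  -- Herstein's argument
  have hkey : ∀ z w : H →L[ℂ] H, Δ * z * (Γ * w * Γ) = 0 := by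
    intro z w
    have h5 : Γ * (z * Γ * w) * Δ = Δ * z * Γ * w * Γ := by
      calc Γ * (z * Γ * w) * Δ = Γ * z * (Γ * w * Δ) := by noncomm_ring
      _ = Γ * z * (-(Δ * w * Γ)) := by rw [I' w]
      _ = -(Γ * z * Δ) * w * Γ := by noncomm_ring
      _ = -(-(Δ * z * Γ)) * w * Γ := by rw [I' z]
      _ = Δ * z * Γ * w * Γ := by noncomm_ring
    have h4 : Γ * (z * Γ * w) * Δ = -(Δ * (z * Γ * w) * Γ) := I' _
    have h8 : Δ * (z * Γ * w) * Γ = Δ * z * Γ * w * Γ := by noncomm_ring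
    rw [h8] at h4
    have h10 : Δ * z * Γ * w * Γ = -(Δ * z * Γ * w * Γ) := h5.symm.trans h4
    have h9 : Δ * z * Γ * w * Γ + Δ * z * Γ * w * Γ = 0 := by
      nth_rewrite 2 [h10]
      simp
    have h11 : Δ * z * Γ * w * Γ = 0 := two_torsion_free h9
    calc Δ * z * (Γ * w * Γ) = Δ * z * Γ * w * Γ := by noncomm_ring
    _ = 0 := h11
  by_cases hΔ0 : Δ = 0
  · right
    have h12 : φ (a * b) - φ b * φ a = 0 := by rw [← hΔ]; exact hΔ0
    exact sub_eq_zero.mp h12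
  · left
    have hG : ∀ w, Γ * w * Γ = 0 := by
      intro w
      rcases prime_lemma (fun z => hkey z w) with h | h
      · exact absurd h hΔ0
      · exact h
    rcases prime_lemma hG with h | h <;>
    · have h13 : φ (a * b) - φ a * φ b = 0 := by rw [← hΓ]; exact h
      exact sub_eq_zero.mp h13

end Jordan

end Stmt18Aux

open Stmt18Aux in
/-- A Jordan *-homomorphism `φ : F(H) → B(H)` sending rank-one projections to rank-one
projections is either a *-homomorphism or a *-antihomomorphism on `F(H)`. -/
theorem stmt18 {H : Type*} [NormedAddCommGroup H] [InnerProductSpace ℂ H] [CompleteSpace H]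
    (φ : (H →L[ℂ] H) → (H →L[ℂ] H))
    (hadd : ∀ A B, IsFinRankOp A → IsFinRankOp B → φ (A + B) = φ A + φ B)
    (hsmul : ∀ (c : ℂ) A, IsFinRankOp A → φ (c • A) = c • φ A)
    (hsq : ∀ A, IsFinRankOp A → φ (A ∘L A) = φ A ∘L φ A)
    (hstar : ∀ A, IsFinRankOp A →
      φ (ContinuousLinearMap.adjoint A) = ContinuousLinearMap.adjoint (φ A))
    (hproj : ∀ P, IsFinRankOp P → IsRankOneProj P → IsRankOneProj (φ P)) :
    (∀ A B, IsFinRankOp A → IsFinRankOp B → φ (A ∘L B) = φ A ∘L φ B) ∨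
      (∀ A B, IsFinRankOp A → IsFinRankOp B → φ (A ∘L B) = φ B ∘L φ A) := by
  have hsq' : ∀ A : H →L[ℂ] H, IsFinRankOp A → φ (A * A) = φ A * φ A := hsq
  have hdi : ∀ a b : H →L[ℂ] H, IsFinRankOp a → IsFinRankOp b →
      φ (a * b) = φ a * φ b ∨ φ (a * b) = φ b * φ a :=
    fun a b ha hb => pair_dichotomy hadd hsmul hsq' hstar hproj ha hb
  have stepA : ∀ a, IsFinRankOp a →
      (∀ b, IsFinRankOp b → φ (a * b) = φ a * φ b) ∨
        (∀ b, IsFinRankOp b → φ (a * b) = φ b * φ a) := by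
    intro a ha
    by_contra hc
    push_neg at hc
    obtain ⟨⟨b₁, hb₁, h1⟩, ⟨b₂, hb₂, h2⟩⟩ := hc
    have k1 : φ (a * b₁) = φ b₁ * φ a := (hdi a b₁ ha hb₁).resolve_left h1
    have k2 : φ (a * b₂) = φ a * φ b₂ := (hdi a b₂ ha hb₂).resolve_right h2
    have hsum : φ (a * (b₁ + b₂)) = φ (a * b₁) + φ (a * b₂) := by
      rw [mul_add, hadd _ _ (isFR_mul_left a hb₁) (isFR_mul_left a hb₂)]
    rcases hdi a (b₁ + b₂) ha (isFR_add hb₁ hb₂) with h | h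
    · rw [hsum, hadd _ _ hb₁ hb₂, mul_add, k2] at h
      exact h1 (add_right_cancel h)
    · rw [hsum, hadd _ _ hb₁ hb₂, add_mul, k1] at h
      exact h2 (add_left_cancel h)
  show (∀ A B, IsFinRankOp A → IsFinRankOp B → φ (A * B) = φ A * φ B) ∨
      (∀ A B, IsFinRankOp A → IsFinRankOp B → φ (A * B) = φ B * φ A)
  by_contra hc
  push_neg at hc
  obtain ⟨⟨a₁, b₁', ha₁, hb₁', h1⟩, ⟨a₂, b₂', ha₂, hb₂', h2⟩⟩ := hc
  have k1 : ∀ b, IsFinRankOp b → φ (a₁ * b) = φ b * φ a₁ :=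
    (stepA a₁ ha₁).resolve_left (fun hall => h1 (hall b₁' hb₁'))
  have k2 : ∀ b, IsFinRankOp b → φ (a₂ * b) = φ a₂ * φ b :=
    (stepA a₂ ha₂).resolve_right (fun hall => h2 (hall b₂' hb₂'))
  have hsum : ∀ b, IsFinRankOp b →
      φ ((a₁ + a₂) * b) = φ (a₁ * b) + φ (a₂ * b) := by
    intro b hbf
    rw [add_mul, hadd _ _ (isFR_mul_right b ha₁) (isFR_mul_right b ha₂)]
  rcases stepA (a₁ + a₂) (isFR_add ha₁ ha₂) with h | h
  · have hx : ∀ b, IsFinRankOp b → φ (a₁ * b) = φ a₁ * φ b := by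
      intro b hbf
      have h3 := h b hbf
      rw [hsum b hbf, hadd _ _ ha₁ ha₂, add_mul, k2 b hbf] at h3
      exact add_right_cancel h3
    exact h1 (hx b₁' hb₁')
  · have hx : ∀ b, IsFinRankOp b → φ (a₂ * b) = φ b * φ a₂ := by
      intro b hbf
      have h3 := h b hbf
      rw [hsum b hbf, hadd _ _ ha₁ ha₂, mul_add, k1 b hbf] at h3
      exact add_left_cancel h3
    exact h2 (hx b₂' hb₂')
end
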